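/- arXiv:2402.14671 — 9 statements merged into one kernel-verified Lean document; each statement's English description precedes it below -/
import Mathlib

section
/- Let X be a Fréchet space with an increasing family of seminorms (‖·‖_k)_{k≥1}, and let d_X(x,y) = Σ_{k=1}^∞ 2^{-k} min(1, ‖x−y‖_k). A linear operator T : X → X satisfies d_X(Tx, Ty) = d_X(x, y) for all x, y ∈ X if and only if ‖Tx‖_k = ‖x‖_k for all x ∈ X and all k ∈ ℕ. -/
/-! The seminorms are recovered from the metric by scaling: testing the isometry on the pairs
`(t • x, 0)` for all `t > 0` shows that the sequences `k ↦ ‖T x‖_k` and `k ↦ ‖x‖_k` have the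
same truncated weighted sums at every scale. If they first differed at index `k`, the scale
that puts the truncation level `1` strictly between the two `k`-th terms would make one sum
strictly larger, because monotonicity saturates every later term of the larger sequence. -/

noncomputable def truncWeightedSum (a : ℕ → ℝ) : ℝ :=
  ∑' k : ℕ, (2:ℝ)⁻¹ ^ (k + 1) * min 1 (a k)

lemma summable_truncWeighted {a : ℕ → ℝ} (ha : 0 ≤ a) :
    Summable fun k => (2:ℝ)⁻¹ ^ (k + 1) * min 1 (a k) := by
  have hgeom : Summable fun k : ℕ => (2:ℝ)⁻¹ ^ (k + 1) :=
    (summable_geometric_two.mul_left (2:ℝ)⁻¹).congr fun k => by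
      rw [pow_succ, mul_comm, one_div]
  refine hgeom.of_nonneg_of_le (fun k => ?_) (fun k => ?_)
  · exact mul_nonneg (by positivity) (le_min zero_le_one (ha k))
  · exact mul_le_of_le_one_right (by positivity) (min_le_left _ _)

lemma truncWeightedSum_lt {a b : ℕ → ℝ} (ha : 0 ≤ a) (hb : 0 ≤ b)
    (hle : ∀ j, min 1 (a j) ≤ min 1 (b j)) {k : ℕ} (hk : min 1 (a k) < min 1 (b k)) :
    truncWeightedSum a < truncWeightedSum b :=
  (summable_truncWeighted ha).tsum_lt_tsum (i := k)
    (fun j => mul_le_mul_of_nonneg_left (hle j) (by positivity))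
    (mul_lt_mul_of_pos_left hk (by positivity)) (summable_truncWeighted hb)

lemma exists_truncWeightedSum_smul_lt {a b : ℕ → ℝ} (ha : 0 ≤ a) (hb : 0 ≤ b)
    (hbmono : Monotone b) {k : ℕ} (heq : ∀ j < k, a j = b j) (hlt : a k < b k) :
    ∃ t : ℝ, 0 < t ∧ truncWeightedSum (t • a) < truncWeightedSum (t • b) := by
  have hak : 0 ≤ a k := ha k
  have hsum : 0 < a k + b k := by linarith
  set t := 2 / (a k + b k)
  have ht : 0 < t := by positivity
  have hta : t * a k < 1 := by rw [div_mul_eq_mul_div, div_lt_one hsum]; linarith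
  have htb : 1 < t * b k := by rw [div_mul_eq_mul_div, lt_div_iff₀ hsum]; linarith
  refine ⟨t, ht, truncWeightedSum_lt (smul_nonneg ht.le ha) (smul_nonneg ht.le hb) (k := k)
    (fun j => ?_) ?_⟩
  · simp only [Pi.smul_apply, smul_eq_mul]
    rcases lt_trichotomy j k with hjk | rfl | hkj
    · rw [heq j hjk]
    · exact min_le_min le_rfl (mul_le_mul_of_nonneg_left hlt.le ht.le)
    · have hsat : 1 ≤ t * b j := htb.le.trans (mul_le_mul_of_nonneg_left (hbmono hkj.le) ht.le)
      exact (min_le_left _ _).trans (min_eq_left hsat).ge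
  · simp only [Pi.smul_apply, smul_eq_mul, min_eq_right hta.le, min_eq_left htb.le]
    exact hta

lemma eq_of_truncWeightedSum_smul_eq {a b : ℕ → ℝ} (ha : 0 ≤ a) (hb : 0 ≤ b)
    (hamono : Monotone a) (hbmono : Monotone b)
    (h : ∀ t : ℝ, 0 < t → truncWeightedSum (t • a) = truncWeightedSum (t • b)) : a = b := by
  funext k
  induction k using Nat.strong_induction_on with
  | _ k ih =>
    rcases lt_trichotomy (a k) (b k) with hlt | heq | hgt
    · obtain ⟨t, ht, hne⟩ := exists_truncWeightedSum_smul_lt ha hb hbmono ih hlt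
      exact absurd (h t ht) hne.ne
    · exact heq
    · obtain ⟨t, ht, hne⟩ :=
        exists_truncWeightedSum_smul_lt hb ha hamono (fun j hj => (ih j hj).symm) hgt
      exact absurd (h t ht) hne.ne'

/-- For a Fréchet space `X` with an increasing family of seminorms
`p k`, a linear operator `T` is an isometry for the metric
`d(x,y) = ∑ 2^{-k} min(1, ‖x-y‖_k)` iff it preserves every seminorm. -/
theorem frechet_isometry_iff_seminorm_preserving
    {X : Type*} [AddCommGroup X] [Module ℝ X]
    (p : ℕ → Seminorm ℝ X) (hmono : Monotone p)
    (T : X →ₗ[ℝ] X) :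
    (∀ x y : X,
        (∑' k : ℕ, (2:ℝ)⁻¹ ^ (k+1) * min 1 (p k (T x - T y)))
          = ∑' k : ℕ, (2:ℝ)⁻¹ ^ (k+1) * min 1 (p k (x - y)))
      ↔ (∀ (x : X) (k : ℕ), p k (T x) = p k x) := by
  constructor
  · intro hiso x
    refine congrFun (eq_of_truncWeightedSum_smul_eq (fun k => apply_nonneg _ _)
      (fun k => apply_nonneg _ _) (fun i j hij => hmono hij (T x)) (fun i j hij => hmono hij x)
      fun t ht => ?_)
    simpa only [truncWeightedSum, Pi.smul_apply, smul_eq_mul, map_smul, map_zero, sub_zero,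
      map_smul_eq_mul, Real.norm_of_nonneg ht.le] using hiso (t • x) 0
  · intro hpres x y
    simp only [← map_sub, hpres]
end

section
/- Let X be a Fréchet space with an increasing family of seminorms (‖·‖_k)_{k≥1}, and let d'_X(x,y) = Σ_{k=1}^∞ 2^{-k} ‖x−y‖_k / (1 + ‖x−y‖_k). A linear operator T : X → X satisfies d'_X(Tx, Ty) = d'_X(x, y) for all x, y if and only if ‖Tx‖_k = ‖x‖_k for all x and all k. -/
/-!
Testing the isometry on the pairs `(s • x, 0)` turns it into the following problem about the
monotone sequences `a k = p k (T x)` and `b k = p k x`: if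
`∑ w k / (1 + s * a k) = ∑ w k / (1 + s * b k)` for all `s > 0`, with positive summable weights
`w`, then `a = b`. It suffices to recover `a 0`, and then to drop the first term and recurse.
If `a 0 = 0 < b 0`, let `s → ∞`. If `0 < a 0 < b 0`, all terms are positive, and expanding
`1 / (1 + s * a k) = a k⁻¹ / (a k⁻¹ + s)` in powers of `1 / s` shows that the two weighted
sequences of reciprocals have the same moments `∑ w k * (a k)⁻¹ ^ n`; but for large `n` the
`k = 0` term `w 0 * (a 0)⁻¹ ^ n` alone exceeds `(∑ w k) * (b 0)⁻¹ ^ n`.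
-/

open Filter Topology

namespace FrechetIsometry

section Moments

variable {w c d : ℕ → ℝ}

noncomputable def moment (w c : ℕ → ℝ) (n : ℕ) : ℝ := ∑' k, w k * c k ^ n

noncomputable def stieltjesMoment (w c : ℕ → ℝ) (n : ℕ) (s : ℝ) : ℝ :=
  ∑' k, w k * c k ^ n / (c k + s)

lemma summable_mul_pow (hw0 : ∀ k, 0 ≤ w k) (hw : Summable w) (hc0 : ∀ k, 0 ≤ c k)
    (hc : Antitone c) (n : ℕ) : Summable fun k => w k * c k ^ n :=
  (hw.mul_right (c 0 ^ n)).of_nonneg_of_le (fun k => mul_nonneg (hw0 k) (pow_nonneg (hc0 k) n))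
    fun k => mul_le_mul_of_nonneg_left (pow_le_pow_left₀ (hc0 k) (hc (Nat.zero_le k)) n) (hw0 k)

section Stieltjes

variable (hw0 : ∀ k, 0 ≤ w k) (hw : Summable w) (hc0 : ∀ k, 0 ≤ c k) (hc : Antitone c)
  {s : ℝ} (hs : 0 < s)

include hw0 hc0 hs in
lemma mul_pow_div_add_nonneg (n : ℕ) (k : ℕ) : 0 ≤ w k * c k ^ n / (c k + s) := by
  have := hw0 k
  have := hc0 k
  positivity

include hw0 hc0 hs in
lemma mul_pow_div_add_le (n : ℕ) (k : ℕ) : w k * c k ^ n / (c k + s) ≤ w k * c k ^ n / s := by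
  have := hc0 k
  have := hw0 k
  gcongr
  linarith

include hw0 hw hc0 hc hs in
lemma summable_mul_pow_div_add (n : ℕ) : Summable fun k => w k * c k ^ n / (c k + s) :=
  ((summable_mul_pow hw0 hw hc0 hc n).div_const s).of_nonneg_of_le
    (mul_pow_div_add_nonneg hw0 hc0 hs n) (mul_pow_div_add_le hw0 hc0 hs n)

include hw0 hw hc0 hc hs in
lemma stieltjesMoment_succ (n : ℕ) :
    stieltjesMoment w c (n + 1) s = moment w c n - s * stieltjesMoment w c n s := by
  have hterm : ∀ k, w k * c k ^ (n + 1) / (c k + s) =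
      w k * c k ^ n - s * (w k * c k ^ n / (c k + s)) := by
    intro k
    have : c k + s ≠ 0 := by linarith [hc0 k]
    field_simp
    ring
  rw [stieltjesMoment, tsum_congr hterm, (summable_mul_pow hw0 hw hc0 hc n).tsum_sub
    ((summable_mul_pow_div_add hw0 hw hc0 hc hs n).mul_left s), tsum_mul_left]
  rfl

end Stieltjes

lemma tendsto_stieltjesMoment (hw0 : ∀ k, 0 ≤ w k) (hw : Summable w) (hc0 : ∀ k, 0 ≤ c k)
    (hc : Antitone c) (n : ℕ) : Tendsto (stieltjesMoment w c n) atTop (𝓝 0) := by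
  refine tendsto_of_tendsto_of_tendsto_of_le_of_le' tendsto_const_nhds
    (tendsto_const_nhds.div_atTop tendsto_id) ?_ ?_ (h := fun s => moment w c n / s)
  · filter_upwards [eventually_gt_atTop 0] with s hs
    exact tsum_nonneg (mul_pow_div_add_nonneg hw0 hc0 hs n)
  · filter_upwards [eventually_gt_atTop 0] with s hs
    rw [moment, ← tsum_div_const]
    exact (summable_mul_pow_div_add hw0 hw hc0 hc hs n).tsum_le_tsum
      (mul_pow_div_add_le hw0 hc0 hs n) ((summable_mul_pow hw0 hw hc0 hc n).div_const s)

/-- By `stieltjesMoment_succ`, the difference of the `(n + 2)`-nd transforms is the constant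
difference of the `(n + 1)`-st moments, and it tends to `0`. -/
lemma moment_eq_of_stieltjesMoment_eq (hw0 : ∀ k, 0 ≤ w k) (hw : Summable w)
    (hc0 : ∀ k, 0 ≤ c k) (hc : Antitone c) (hd0 : ∀ k, 0 ≤ d k) (hd : Antitone d)
    (hcd : ∀ s > 0, stieltjesMoment w c 1 s = stieltjesMoment w d 1 s) (n : ℕ) :
    moment w c n = moment w d n := by
  have step : ∀ n, (∀ s > 0, stieltjesMoment w c (n + 1) s = stieltjesMoment w d (n + 1) s) →
      moment w c (n + 1) = moment w d (n + 1) ∧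
        ∀ s > 0, stieltjesMoment w c (n + 2) s = stieltjesMoment w d (n + 2) s := by
    intro n hn
    have hconst : ∀ s > 0, stieltjesMoment w c (n + 2) s - stieltjesMoment w d (n + 2) s =
        moment w c (n + 1) - moment w d (n + 1) := by
      intro s hs
      rw [stieltjesMoment_succ hw0 hw hc0 hc hs, stieltjesMoment_succ hw0 hw hd0 hd hs, hn s hs]
      ring
    have hlim := (tendsto_stieltjesMoment hw0 hw hc0 hc (n + 2)).sub
      (tendsto_stieltjesMoment hw0 hw hd0 hd (n + 2))
    rw [sub_zero] at hlim
    have hzero : moment w c (n + 1) - moment w d (n + 1) = 0 :=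
      tendsto_nhds_unique (tendsto_const_nhds.congr'
        (eventually_gt_atTop 0 |>.mono fun s hs => (hconst s hs).symm)) hlim
    refine ⟨sub_eq_zero.mp hzero, fun s hs => ?_⟩
    linarith [hconst s hs]
  have hS : ∀ n, ∀ s > 0, stieltjesMoment w c (n + 1) s = stieltjesMoment w d (n + 1) s :=
    fun n => Nat.rec hcd (fun n ih => (step n ih).2) n
  cases n with
  | zero => simp [moment]
  | succ n => exact (step n (hS n)).1

lemma exists_moment_lt (hw0 : ∀ k, 0 < w k) (hw : Summable w) (hc0 : ∀ k, 0 ≤ c k)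
    (hc : Antitone c) (hd0 : ∀ k, 0 ≤ d k) (hd : Antitone d) (hlt : d 0 < c 0) :
    ∃ n, moment w d n < moment w c n := by
  have hw0' : ∀ k, 0 ≤ w k := fun k => (hw0 k).le
  set W := ∑' k, w k
  have hW : 0 < W := (hw0 0).trans_le (hw.le_tsum 0 fun k _ => hw0' k)
  have hc0pos : 0 < c 0 := (hd0 0).trans_lt hlt
  obtain ⟨n, hn⟩ := exists_pow_lt_of_lt_one (div_pos (hw0 0) hW)
    ((div_lt_one hc0pos).mpr hlt)
  refine ⟨n, ?_⟩
  have hd_le : moment w d n ≤ W * d 0 ^ n := by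
    rw [moment, ← tsum_mul_right]
    exact (summable_mul_pow hw0' hw hd0 hd n).tsum_le_tsum
      (fun k => mul_le_mul_of_nonneg_left (pow_le_pow_left₀ (hd0 k) (hd (Nat.zero_le k)) n)
        (hw0' k)) (hw.mul_right _)
  have hc_ge : w 0 * c 0 ^ n ≤ moment w c n :=
    (summable_mul_pow hw0' hw hc0 hc n).le_tsum 0
      fun k _ => mul_nonneg (hw0' k) (pow_nonneg (hc0 k) n)
  have hdom : W * d 0 ^ n < w 0 * c 0 ^ n := by
    rw [div_pow, div_lt_div_iff₀ (pow_pos hc0pos n) hW] at hn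
    linarith
  linarith

end Moments

section Resolvent

noncomputable def resolventSum (w a : ℕ → ℝ) (s : ℝ) : ℝ := ∑' k, w k / (1 + s * a k)

variable {w a b : ℕ → ℝ} {s : ℝ}

lemma summable_div_one_add_mul (hw0 : ∀ k, 0 ≤ w k) (hw : Summable w) (ha0 : ∀ k, 0 ≤ a k)
    (hs : 0 ≤ s) : Summable fun k => w k / (1 + s * a k) :=
  hw.of_nonneg_of_le (fun k => div_nonneg (hw0 k) (by nlinarith [mul_nonneg hs (ha0 k)]))
    fun k => div_le_self (hw0 k) (le_add_of_nonneg_right (mul_nonneg hs (ha0 k)))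

lemma resolventSum_eq_zero_add (hw0 : ∀ k, 0 ≤ w k) (hw : Summable w) (ha0 : ∀ k, 0 ≤ a k)
    (hs : 0 ≤ s) : resolventSum w a s =
      w 0 / (1 + s * a 0) + resolventSum (fun k => w (k + 1)) (fun k => a (k + 1)) s :=
  (summable_div_one_add_mul hw0 hw ha0 hs).tsum_eq_zero_add

lemma resolventSum_eq_stieltjesMoment_inv (ha : ∀ k, 0 < a k) (hs : 0 ≤ s) :
    resolventSum w a s = stieltjesMoment w (fun k => (a k)⁻¹) 1 s := by
  refine tsum_congr fun k => ?_
  have := ha k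
  have : 0 < 1 + s * a k := by positivity
  field_simp

lemma le_resolventSum (hw0 : ∀ k, 0 ≤ w k) (hw : Summable w) (ha0 : ∀ k, 0 ≤ a k)
    (hs : 0 ≤ s) : w 0 / (1 + s * a 0) ≤ resolventSum w a s :=
  (summable_div_one_add_mul hw0 hw ha0 hs).le_tsum 0
    fun k _ => div_nonneg (hw0 k) (by nlinarith [mul_nonneg hs (ha0 k)])

lemma resolventSum_le (hw0 : ∀ k, 0 ≤ w k) (hw : Summable w) (hb0 : 0 ≤ b 0)
    (hb : Monotone b) (hs : 0 ≤ s) : resolventSum w b s ≤ (∑' k, w k) / (1 + s * b 0) := by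
  have hb0' : ∀ k, 0 ≤ b k := fun k => hb0.trans (hb (Nat.zero_le k))
  rw [← tsum_div_const]
  exact (summable_div_one_add_mul hw0 hw hb0' hs).tsum_le_tsum
    (fun k => div_le_div_of_nonneg_left (hw0 k) (by nlinarith [mul_nonneg hs hb0])
      (by nlinarith [mul_le_mul_of_nonneg_left (hb (Nat.zero_le k)) hs]))
    (hw.div_const _)

section Head

variable (hw0 : ∀ k, 0 < w k) (hw : Summable w) (ha0 : ∀ k, 0 ≤ a k)
  (ha : Monotone a) (hb : Monotone b)
  (h : ∀ s > 0, resolventSum w a s = resolventSum w b s)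

include hw0 hw ha0 hb h in
lemma not_lt_of_resolventSum_eq_of_eq_zero (hz : a 0 = 0) : ¬ a 0 < b 0 := by
  intro hlt
  rw [hz] at hlt
  have hw0' : ∀ k, 0 ≤ w k := fun k => (hw0 k).le
  set W := ∑' k, w k
  have hW : 0 ≤ W := tsum_nonneg hw0'
  set s := W / (w 0 * b 0) + 1
  have hs : 0 < s := add_pos_of_nonneg_of_pos (div_nonneg hW (mul_pos (hw0 0) hlt).le) one_pos
  have hbound := (le_resolventSum hw0' hw ha0 hs.le).trans
    ((h s hs).trans_le (resolventSum_le hw0' hw hlt.le hb hs.le))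
  rw [hz, mul_zero, add_zero, div_one, le_div_iff₀ (by positivity)] at hbound
  have hsb : w 0 * (s * b 0) = W + w 0 * b 0 := by
    have := (hw0 0).ne'
    have := hlt.ne'
    simp only [s]
    field_simp
  nlinarith [hw0 0, mul_pos (hw0 0) hlt]

include hw0 hw ha hb h in
lemma not_lt_of_resolventSum_eq_of_pos (hpos : 0 < a 0) : ¬ a 0 < b 0 := by
  intro hlt
  have ha_pos : ∀ k, 0 < a k := fun k => hpos.trans_le (ha (Nat.zero_le k))
  have hb_pos : ∀ k, 0 < b k := fun k => (hpos.trans hlt).trans_le (hb (Nat.zero_le k))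
  have hinv_anti : ∀ {u : ℕ → ℝ}, (∀ k, 0 < u k) → Monotone u → Antitone fun k => (u k)⁻¹ :=
    fun hu hmu _ _ hij => inv_anti₀ (hu _) (hmu hij)
  have hc0 : ∀ k, 0 ≤ (a k)⁻¹ := fun k => (ha_pos k).le |> inv_nonneg.mpr
  have hd0 : ∀ k, 0 ≤ (b k)⁻¹ := fun k => (hb_pos k).le |> inv_nonneg.mpr
  have hmoment := moment_eq_of_stieltjesMoment_eq (fun k => (hw0 k).le) hw hc0
    (hinv_anti ha_pos ha) hd0 (hinv_anti hb_pos hb) fun s hs => by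
      rw [← resolventSum_eq_stieltjesMoment_inv ha_pos hs.le,
        ← resolventSum_eq_stieltjesMoment_inv hb_pos hs.le, h s hs]
  obtain ⟨n, hn⟩ := exists_moment_lt hw0 hw hc0 (hinv_anti ha_pos ha) hd0 (hinv_anti hb_pos hb)
    ((inv_lt_inv₀ (hb_pos 0) hpos).mpr hlt)
  exact (hmoment n).not_gt hn

include hw0 hw ha0 ha hb h in
lemma not_lt_of_resolventSum_eq : ¬ a 0 < b 0 :=
  (ha0 0).eq_or_lt.elim
    (fun hz => not_lt_of_resolventSum_eq_of_eq_zero hw0 hw ha0 hb h hz.symm)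
    (not_lt_of_resolventSum_eq_of_pos hw0 hw ha hb h)

end Head

lemma head_eq_of_resolventSum_eq (hw0 : ∀ k, 0 < w k) (hw : Summable w) (ha0 : ∀ k, 0 ≤ a k)
    (hb0 : ∀ k, 0 ≤ b k) (ha : Monotone a) (hb : Monotone b)
    (h : ∀ s > 0, resolventSum w a s = resolventSum w b s) : a 0 = b 0 :=
  le_antisymm
    (not_lt.mp (not_lt_of_resolventSum_eq hw0 hw hb0 hb ha fun s hs => (h s hs).symm))
    (not_lt.mp (not_lt_of_resolventSum_eq hw0 hw ha0 ha hb h))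

lemma eq_of_resolventSum_eq (hw0 : ∀ k, 0 < w k) (hw : Summable w) (ha0 : ∀ k, 0 ≤ a k)
    (hb0 : ∀ k, 0 ≤ b k) (ha : Monotone a) (hb : Monotone b)
    (h : ∀ s > 0, resolventSum w a s = resolventSum w b s) : a = b := by
  funext j
  induction j generalizing w a b with
  | zero => exact head_eq_of_resolventSum_eq hw0 hw ha0 hb0 ha hb h
  | succ j ih =>
    have hhead := head_eq_of_resolventSum_eq hw0 hw ha0 hb0 ha hb h
    have hw0' : ∀ k, 0 ≤ w k := fun k => (hw0 k).le
    refine ih (w := fun k => w (k + 1)) (a := fun k => a (k + 1)) (b := fun k => b (k + 1))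
      (fun k => hw0 _) ((summable_nat_add_iff 1).mpr hw) (fun k => ha0 _) (fun k => hb0 _)
      (fun i j hij => ha (by omega)) (fun i j hij => hb (by omega)) fun s hs => ?_
    have := h s hs
    rw [resolventSum_eq_zero_add hw0' hw ha0 hs.le, resolventSum_eq_zero_add hw0' hw hb0 hs.le,
      hhead] at this
    exact add_left_cancel this

end Resolvent

lemma tsum_mul_div_one_add_mul {w a : ℕ → ℝ} (hw0 : ∀ k, 0 ≤ w k) (hw : Summable w)
    (ha0 : ∀ k, 0 ≤ a k) {s : ℝ} (hs : 0 ≤ s) :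
    ∑' k, w k * (s * a k / (1 + s * a k)) = ∑' k, w k - resolventSum w a s := by
  rw [resolventSum, ← hw.tsum_sub (summable_div_one_add_mul hw0 hw ha0 hs)]
  refine tsum_congr fun k => ?_
  have : 0 < 1 + s * a k := by nlinarith [mul_nonneg hs (ha0 k)]
  field_simp
  ring

lemma eq_of_tsum_mul_div_one_add_mul_eq {w a b : ℕ → ℝ} (hw0 : ∀ k, 0 < w k) (hw : Summable w)
    (ha0 : ∀ k, 0 ≤ a k) (hb0 : ∀ k, 0 ≤ b k) (ha : Monotone a) (hb : Monotone b)
    (h : ∀ s > 0,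
      ∑' k, w k * (s * a k / (1 + s * a k)) = ∑' k, w k * (s * b k / (1 + s * b k))) :
    a = b := by
  have hw0' : ∀ k, 0 ≤ w k := fun k => (hw0 k).le
  refine eq_of_resolventSum_eq hw0 hw ha0 hb0 ha hb fun s hs => ?_
  have := h s hs
  rw [tsum_mul_div_one_add_mul hw0' hw ha0 hs.le,
    tsum_mul_div_one_add_mul hw0' hw hb0 hs.le] at this
  exact sub_right_injective this

end FrechetIsometry

/-- For a Fréchet space `X` with an increasing family of seminorms
`p k`, a linear operator `T` is an isometry for the metric
`d'(x,y) = ∑ 2^{-k} ‖x-y‖_k / (1 + ‖x-y‖_k)` iff it preserves every seminorm. -/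
theorem frechet_isometry_iff_seminorm_preserving'
    {X : Type*} [AddCommGroup X] [Module ℝ X]
    (p : ℕ → Seminorm ℝ X) (hmono : Monotone p)
    (T : X →ₗ[ℝ] X) :
    (∀ x y : X,
        (∑' k : ℕ, (2:ℝ)⁻¹ ^ (k+1) * (p k (T x - T y) / (1 + p k (T x - T y))))
          = ∑' k : ℕ, (2:ℝ)⁻¹ ^ (k+1) * (p k (x - y) / (1 + p k (x - y))))
      ↔ (∀ (x : X) (k : ℕ), p k (T x) = p k x) := by
  refine ⟨fun hiso x => congrFun ?_, fun hp x y => by simp only [← map_sub, hp]⟩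
  refine FrechetIsometry.eq_of_tsum_mul_div_one_add_mul_eq (w := fun k => (2:ℝ)⁻¹ ^ (k + 1))
    (fun k => by positivity)
    ((summable_nat_add_iff 1).mpr (summable_geometric_of_lt_one (by norm_num) (by norm_num)))
    (fun k => apply_nonneg _ _) (fun k => apply_nonneg _ _)
    (fun i j hij => hmono hij (T x)) (fun i j hij => hmono hij x) fun s hs => ?_
  simpa [map_smul_eq_mul, abs_of_pos hs] using hiso (s • x) 0
end

section
/- Let ε > 0 and let g be holomorphic on (1+ε)𝔻 with g(𝕋) ⊆ 𝕋 (the unit circle maps into itself). Then g restricted to the closed unit disc is a finite Blaschke product, i.e., g(z) = e^{iθ} z^N ∏_{j=1}^{K} (z − α_j)/(1 − conj(α_j) z) for some θ ∈ ℝ, N, K ∈ ℕ and α_j ∈ 𝔻 ∖ {0}. -/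
/-!
If `g a = 0` with `‖a‖ ≤ 1`, then `‖a‖ < 1` because `g` is unimodular on the circle, and
`g / b_a`, with `b_a z = (z - a) / (1 - conj a * z)`, is again holomorphic near the closed disc
and unimodular on the circle (`b_a` is unimodular there), with one zero fewer counted with
multiplicity; there are finitely many such zeros by compactness. After dividing out all of them,
the maximum modulus principle applied to the quotient and to its reciprocal shows that it has
constant modulus one on the disc, hence is a unimodular constant.
-/

open Metric Complex Set ComplexConjugate MeromorphicOn

noncomputable def blaschkeFactor (a z : ℂ) : ℂ := (z - a) / (1 - conj a * z)

@[simp]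
lemma blaschkeFactor_zero_left (z : ℂ) : blaschkeFactor 0 z = z := by
  simp [blaschkeFactor]

lemma one_sub_conj_mul_ne_zero {a z : ℂ} (ha : ‖a‖ < 1) (hz : ‖z‖ ≤ 1) : 1 - conj a * z ≠ 0 := by
  refine sub_ne_zero.mpr fun h => ?_
  have : ‖conj a * z‖ < 1 := by
    rw [norm_mul, norm_conj]
    nlinarith [norm_nonneg a, norm_nonneg z]
  simp [← h] at this

lemma norm_one_sub_conj_mul {a z : ℂ} (hz : ‖z‖ = 1) : ‖1 - conj a * z‖ = ‖z - a‖ := by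
  have hzz : conj z * z = 1 := by
    rw [mul_comm, mul_conj, normSq_eq_norm_sq, hz]; norm_num
  calc ‖1 - conj a * z‖ = ‖conj z * z - conj a * z‖ := by rw [hzz]
    _ = ‖conj (z - a)‖ * ‖z‖ := by rw [← sub_mul, norm_mul, map_sub]
    _ = ‖z - a‖ := by rw [norm_conj, hz, mul_one]

def IsFiniteBlaschkeProductOn (f : ℂ → ℂ) (s : Set ℂ) : Prop :=
  ∃ (θ : ℝ) (N K : ℕ) (α : Fin K → ℂ), (∀ j, ‖α j‖ < 1 ∧ α j ≠ 0) ∧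
    ∀ z ∈ s, f z = exp (θ * I) * z ^ N * ∏ j, blaschkeFactor (α j) z

section IsFiniteBlaschkeProductOn

variable {f f₁ : ℂ → ℂ} {s : Set ℂ}

lemma isFiniteBlaschkeProductOn_of_eqOn_const {c : ℂ} (hc : ‖c‖ = 1)
    (hf : EqOn f (Function.const ℂ c) s) : IsFiniteBlaschkeProductOn f s := by
  refine ⟨arg c, 0, 0, finZeroElim, finZeroElim, fun z hz => ?_⟩
  simpa [hf hz, hc] using (norm_mul_exp_arg_mul_I c).symm

lemma IsFiniteBlaschkeProductOn.of_eq_mul_blaschkeFactor (h : IsFiniteBlaschkeProductOn f₁ s)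
    {a : ℂ} (ha : ‖a‖ < 1) (hf : ∀ z ∈ s, f z = f₁ z * blaschkeFactor a z) :
    IsFiniteBlaschkeProductOn f s := by
  obtain ⟨θ, N, K, α, hα, hf₁⟩ := h
  rcases eq_or_ne a 0 with rfl | ha₀
  · refine ⟨θ, N + 1, K, α, hα, fun z hz => ?_⟩
    rw [hf z hz, hf₁ z hz, blaschkeFactor_zero_left]
    ring
  · refine ⟨θ, N, K + 1, Fin.cons a α, Fin.cases ⟨ha, ha₀⟩ hα, fun z hz => ?_⟩
    rw [hf z hz, hf₁ z hz, Fin.prod_univ_succ]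
    simp only [Fin.cons_zero, Fin.cons_succ]
    ring

end IsFiniteBlaschkeProductOn

lemma AnalyticOnNhd.dslope {E : Type*} [NormedAddCommGroup E] [NormedSpace ℂ E] [CompleteSpace E]
    {f : ℂ → E} {s : Set ℂ} {a : ℂ} (hf : AnalyticOnNhd ℂ f s) (ha : a ∈ s) :
    AnalyticOnNhd ℂ (dslope f a) s := by
  have hU : IsOpen {w | AnalyticAt ℂ f w} := isOpen_analyticAt ℂ f
  have hd : DifferentiableOn ℂ (_root_.dslope f a) {w | AnalyticAt ℂ f w} :=
    (differentiableOn_dslope (hU.mem_nhds (hf a ha))).mpr fun w hw => hw.differentiableWithinAt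
  exact fun z hz => hd.analyticOnNhd hU z (hf z hz)

lemma eq_sub_mul_dslope {f : ℂ → ℂ} {a : ℂ} (hfa : f a = 0) (z : ℂ) :
    f z = (z - a) * dslope f a z := by
  simpa [hfa] using (sub_smul_dslope f a z).symm

noncomputable def diskZeroCount (f : ℂ → ℂ) : ℤ := ∑ᶠ z, divisor f (closedBall 0 1) z

section diskZeroCount

variable {f g : ℂ → ℂ}

lemma meromorphicOrderAt_ne_top_of_apply_ne_zero (hf : AnalyticOnNhd ℂ f (closedBall 0 1))
    {w : ℂ} (hw : w ∈ closedBall (0 : ℂ) 1) (hfw : f w ≠ 0) :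
    ∀ z ∈ closedBall (0 : ℂ) 1, meromorphicOrderAt f z ≠ ⊤ := fun _ hz =>
  meromorphicOrderAt_ne_top_of_isPreconnected hf.meromorphicOn
    (convex_closedBall 0 1).isPreconnected hw hz
    (by simp [(hf w hw).meromorphicOrderAt_eq, (hf w hw).analyticOrderAt_eq_zero.mpr hfw])

lemma diskZeroCount_nonneg (hf : AnalyticOnNhd ℂ f (closedBall 0 1)) : 0 ≤ diskZeroCount f :=
  finsum_nonneg fun z => hf.divisor_nonneg z

lemma diskZeroCount_eq_zero (hf : AnalyticOnNhd ℂ f (closedBall 0 1))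
    (h : ∀ z ∈ closedBall (0 : ℂ) 1, f z ≠ 0) : diskZeroCount f = 0 := by
  refine finsum_eq_zero_of_forall_eq_zero fun z => ?_
  by_cases hz : z ∈ closedBall (0 : ℂ) 1
  · simp [hf.divisor_apply hz, (hf z hz).analyticOrderAt_eq_zero.mpr (h z hz)]
  · exact (divisor f _).apply_eq_zero_of_notMem hz

lemma diskZeroCount_sub_const {a : ℂ} (ha : a ∈ closedBall (0 : ℂ) 1) :
    diskZeroCount (· - a) = 1 := by
  rw [diskZeroCount, finsum_eq_single _ a fun z hz => divisor_sub_const_of_ne hz,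
    divisor_sub_const_self ha]

lemma diskZeroCount_mul (hf : AnalyticOnNhd ℂ f (closedBall 0 1))
    (hg : AnalyticOnNhd ℂ g (closedBall 0 1))
    (hf' : ∀ z ∈ closedBall (0 : ℂ) 1, meromorphicOrderAt f z ≠ ⊤)
    (hg' : ∀ z ∈ closedBall (0 : ℂ) 1, meromorphicOrderAt g z ≠ ⊤) :
    diskZeroCount (fun z => f z * g z) = diskZeroCount f + diskZeroCount g := by
  rw [diskZeroCount, divisor_fun_mul hf.meromorphicOn hg.meromorphicOn hf' hg',
    Function.locallyFinsuppWithin.coe_add]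
  exact finsum_add_distrib ((divisor f _).finiteSupport (isCompact_closedBall 0 1))
    ((divisor g _).finiteSupport (isCompact_closedBall 0 1))

end diskZeroCount

noncomputable def divBlaschkeFactor (f : ℂ → ℂ) (a : ℂ) : ℂ → ℂ :=
  fun z => dslope f a z * (1 - conj a * z)

section UnitCircle

variable {f : ℂ → ℂ} {a : ℂ}

lemma eq_divBlaschkeFactor_mul_blaschkeFactor (hfa : f a = 0) {z : ℂ} (hz : 1 - conj a * z ≠ 0) :
    f z = divBlaschkeFactor f a z * blaschkeFactor a z := by
  rw [eq_sub_mul_dslope hfa z, divBlaschkeFactor, blaschkeFactor, mul_assoc, mul_div_cancel₀ _ hz,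
    mul_comm]

lemma analyticOnNhd_divBlaschkeFactor (hf : AnalyticOnNhd ℂ f (closedBall 0 1))
    (ha : a ∈ closedBall (0 : ℂ) 1) : AnalyticOnNhd ℂ (divBlaschkeFactor f a) (closedBall 0 1) :=
  fun z hz => (hf.dslope ha z hz).mul (by fun_prop)

lemma apply_ne_zero_of_mapsTo_sphere (hmap : MapsTo f (sphere 0 1) (sphere 0 1)) {z : ℂ}
    (hz : z ∈ sphere (0 : ℂ) 1) : f z ≠ 0 :=
  ne_zero_of_mem_unit_sphere (⟨f z, hmap hz⟩ : sphere (0 : ℂ) 1)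

lemma norm_lt_one_of_mapsTo_sphere (hmap : MapsTo f (sphere 0 1) (sphere 0 1))
    (ha : a ∈ closedBall (0 : ℂ) 1) (hfa : f a = 0) : ‖a‖ < 1 :=
  (mem_closedBall_zero_iff.mp ha).lt_of_ne fun h =>
    apply_ne_zero_of_mapsTo_sphere hmap (mem_sphere_zero_iff_norm.mpr h) hfa

lemma mapsTo_divBlaschkeFactor (hmap : MapsTo f (sphere 0 1) (sphere 0 1)) (hfa : f a = 0) :
    MapsTo (divBlaschkeFactor f a) (sphere 0 1) (sphere 0 1) := by
  intro z hz
  have hfz : ‖(z - a) * dslope f a z‖ = 1 := by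
    rw [← eq_sub_mul_dslope hfa, ← mem_sphere_zero_iff_norm]
    exact hmap hz
  rw [mem_sphere_zero_iff_norm] at hz ⊢
  rw [divBlaschkeFactor, norm_mul, norm_one_sub_conj_mul hz, mul_comm, ← norm_mul, hfz]

lemma diskZeroCount_eq_divBlaschkeFactor_add_one (hf : AnalyticOnNhd ℂ f (closedBall 0 1))
    (hmap : MapsTo f (sphere 0 1) (sphere 0 1)) (ha : a ∈ closedBall (0 : ℂ) 1) (hfa : f a = 0) :
    diskZeroCount f = diskZeroCount (divBlaschkeFactor f a) + 1 := by
  have ha₁ := norm_lt_one_of_mapsTo_sphere hmap ha hfa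
  have h₁ : (1 : ℂ) ∈ closedBall 0 1 := by simp
  have hlin : AnalyticOnNhd ℂ (· - a) (closedBall 0 1) := fun _ _ => by fun_prop
  have hd := hf.dslope ha
  have hden : AnalyticOnNhd ℂ (fun z => 1 - conj a * z) (closedBall 0 1) := fun _ _ => by fun_prop
  have hden_ne : ∀ z ∈ closedBall (0 : ℂ) 1, 1 - conj a * z ≠ 0 := fun z hz =>
    one_sub_conj_mul_ne_zero ha₁ (mem_closedBall_zero_iff.mp hz)
  have hlin₁ : (1 : ℂ) - a ≠ 0 := sub_ne_zero.mpr fun h => by simp [← h] at ha₁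
  have hd₁ : dslope f a 1 ≠ 0 := fun h =>
    apply_ne_zero_of_mapsTo_sphere hmap (by simp : (1 : ℂ) ∈ sphere 0 1)
      (by rw [eq_sub_mul_dslope hfa, h, mul_zero])
  calc diskZeroCount f = diskZeroCount (fun z => (z - a) * dslope f a z) := by
        rw [← funext (eq_sub_mul_dslope hfa)]
    _ = 1 + diskZeroCount (dslope f a) := by
        rw [diskZeroCount_mul hlin hd (meromorphicOrderAt_ne_top_of_apply_ne_zero hlin h₁ hlin₁)
          (meromorphicOrderAt_ne_top_of_apply_ne_zero hd h₁ hd₁), diskZeroCount_sub_const ha]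
    _ = diskZeroCount (divBlaschkeFactor f a) + 1 := by
        unfold divBlaschkeFactor
        rw [diskZeroCount_mul hd hden
          (meromorphicOrderAt_ne_top_of_apply_ne_zero hd h₁ hd₁)
          (meromorphicOrderAt_ne_top_of_apply_ne_zero hden h₁ (hden_ne 1 h₁)),
          diskZeroCount_eq_zero hden hden_ne]
        ring

lemma norm_le_one_of_forall_mem_sphere {g : ℂ → ℂ} (hg : AnalyticOnNhd ℂ g (closedBall 0 1))
    (hg₁ : ∀ z ∈ sphere (0 : ℂ) 1, ‖g z‖ ≤ 1) {z : ℂ} (hz : z ∈ closedBall (0 : ℂ) 1) :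
    ‖g z‖ ≤ 1 := by
  have hcl : closure (ball (0 : ℂ) 1) = closedBall 0 1 := closure_ball 0 one_ne_zero
  exact norm_le_of_forall_mem_frontier_norm_le isBounded_ball
    (hcl ▸ hg.differentiableOn).diffContOnCl (frontier_ball (0 : ℂ) one_ne_zero ▸ hg₁) (hcl ▸ hz)

lemma eqOn_const_of_mapsTo_sphere_of_ne_zero (hf : AnalyticOnNhd ℂ f (closedBall 0 1))
    (hmap : MapsTo f (sphere 0 1) (sphere 0 1)) (hne : ∀ z ∈ closedBall (0 : ℂ) 1, f z ≠ 0) :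
    EqOn f (Function.const ℂ (f 0)) (closedBall 0 1) := by
  have hf₁ : ∀ z ∈ sphere (0 : ℂ) 1, ‖f z‖ = 1 := fun z hz => mem_sphere_zero_iff_norm.mp (hmap hz)
  have hle : ∀ z ∈ closedBall (0 : ℂ) 1, ‖f z‖ ≤ 1 := fun z hz =>
    norm_le_one_of_forall_mem_sphere hf (fun w hw => (hf₁ w hw).le) hz
  have hge : ∀ z ∈ closedBall (0 : ℂ) 1, 1 ≤ ‖f z‖ := by
    intro z hz
    have := norm_le_one_of_forall_mem_sphere (g := fun z => (f z)⁻¹)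
      (fun z hz => (hf z hz).inv (hne z hz)) (fun z hz => by simp [hf₁ z hz]) hz
    rwa [norm_inv, inv_le_one₀ (norm_pos_iff.mpr (hne z hz))] at this
  refine eqOn_closedBall_of_isMaxOn_norm
    (closure_ball (0 : ℂ) one_ne_zero ▸ hf.differentiableOn).diffContOnCl fun z hz => ?_
  show ‖f z‖ ≤ ‖f 0‖
  linarith [hle z (ball_subset_closedBall hz), hge 0 (by simp)]

theorem isFiniteBlaschkeProductOn_of_mapsTo_sphere (hf : AnalyticOnNhd ℂ f (closedBall 0 1))
    (hmap : MapsTo f (sphere 0 1) (sphere 0 1)) : IsFiniteBlaschkeProductOn f (closedBall 0 1) := by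
  obtain ⟨n, hn⟩ := Int.eq_ofNat_of_zero_le (diskZeroCount_nonneg hf)
  induction n using Nat.strong_induction_on generalizing f with
  | _ n ih =>
  by_cases hne : ∀ z ∈ closedBall (0 : ℂ) 1, f z ≠ 0
  · have hconst := eqOn_const_of_mapsTo_sphere_of_ne_zero hf hmap hne
    have hf₁ : f 1 = f 0 := hconst (by simp : (1 : ℂ) ∈ closedBall 0 1)
    exact isFiniteBlaschkeProductOn_of_eqOn_const
      (hf₁ ▸ mem_sphere_zero_iff_norm.mp (hmap (by simp))) hconst
  push Not at hne
  obtain ⟨a, ha, hfa⟩ := hne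
  have ha₁ := norm_lt_one_of_mapsTo_sphere hmap ha hfa
  have hcount := diskZeroCount_eq_divBlaschkeFactor_add_one hf hmap ha hfa
  have hf' := analyticOnNhd_divBlaschkeFactor hf ha
  obtain ⟨m, hm⟩ := Int.eq_ofNat_of_zero_le (diskZeroCount_nonneg hf')
  refine (ih m (by omega) hf' (mapsTo_divBlaschkeFactor hmap hfa) hm).of_eq_mul_blaschkeFactor
    ha₁ fun z hz => eq_divBlaschkeFactor_mul_blaschkeFactor hfa ?_
  exact one_sub_conj_mul_ne_zero ha₁ (mem_closedBall_zero_iff.mp hz)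

end UnitCircle

/-- If `g` is holomorphic on `(1+ε)𝔻` and maps the unit circle
into itself, then on the closed unit disc `g` is a finite Blaschke product:
`g(z) = e^{iθ} z^N ∏_j (z - α_j)/(1 - conj(α_j) z)` with `α_j ∈ 𝔻 \ {0}`. -/
theorem circle_to_circle_is_finite_Blaschke
    (ε : ℝ) (hε : 0 < ε) (g : ℂ → ℂ)
    (hg : DifferentiableOn ℂ g (Metric.ball 0 (1 + ε)))
    (hmap : Set.MapsTo g (Metric.sphere 0 1) (Metric.sphere 0 1)) :
    ∃ (θ : ℝ) (N K : ℕ) (α : Fin K → ℂ),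
      (∀ j, ‖α j‖ < 1 ∧ α j ≠ 0) ∧
      ∀ z ∈ Metric.closedBall (0:ℂ) 1,
        g z = Complex.exp (θ * Complex.I) * z ^ N *
          ∏ j, (z - α j) / (1 - (starRingEnd ℂ) (α j) * z) :=
  isFiniteBlaschkeProductOn_of_mapsTo_sphere
    ((hg.analyticOnNhd isOpen_ball).mono (closedBall_subset_ball (by linarith))) hmap
end

section
/- Let ε > 0 and let f be holomorphic on (1+ε)𝔻 such that f(closure of 𝔻) = closure of 𝔻 and f((1+ε)𝔻) ⊆ (1+ε)𝔻. Then f is a rotation: there exists β ∈ ℂ with |β| = 1 such that f(z) = β z for all z. -/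
/-!
Write `R = 1 + ε`. First, `f 0 = 0`: otherwise compose `f` with the automorphism of the disc
`ball 0 R` moving `a = f 0` to `0`. By the Schwarz lemma the composite does not increase norms,
but a point `z` of the closed unit disc with `f z = -a / ‖a‖` is sent to a point of norm
`R² (1 + ‖a‖) / (R² + ‖a‖) > 1 ≥ ‖z‖`. Then a point `z₀` of the closed unit disc with
`f z₀ = 1` satisfies `1 ≤ ‖z₀‖` by the Schwarz lemma, so it is an interior point of `ball 0 R` at
which equality holds in the Schwarz lemma, and `f` is a rotation.
-/

open Metric Complex Set ComplexConjugate

/-- The automorphism of `ball 0 R` that sends `a` to `0`. -/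
noncomputable def mobiusBall (R : ℝ) (a ζ : ℂ) : ℂ := (R : ℂ) ^ 2 * (ζ - a) / ((R : ℂ) ^ 2 - conj a * ζ)

theorem norm_sq_sq_sub_conj_mul (R : ℝ) (a ζ : ℂ) :
    ‖(R : ℂ) ^ 2 - conj a * ζ‖ ^ 2 = (R * ‖ζ - a‖) ^ 2 + (R ^ 2 - ‖a‖ ^ 2) * (R ^ 2 - ‖ζ‖ ^ 2) := by
  rw [mul_pow, Complex.sq_norm, Complex.sq_norm, Complex.sq_norm, Complex.sq_norm]
  simp only [Complex.normSq_apply, Complex.sub_re, Complex.sub_im, Complex.mul_re, Complex.mul_im,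
    Complex.conj_re, Complex.conj_im, Complex.ofReal_re, Complex.ofReal_im, pow_two]
  ring

section MobiusBall

variable {R : ℝ} {a ζ : ℂ}

theorem mul_norm_sub_lt_norm_sq_sub_conj_mul (ha : ‖a‖ < R) (hζ : ‖ζ‖ < R) :
    R * ‖ζ - a‖ < ‖(R : ℂ) ^ 2 - conj a * ζ‖ := by
  have hpos : 0 < (R ^ 2 - ‖a‖ ^ 2) * (R ^ 2 - ‖ζ‖ ^ 2) := by
    apply mul_pos <;> nlinarith [norm_nonneg a, norm_nonneg ζ]
  have := norm_sq_sq_sub_conj_mul R a ζ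
  exact abs_lt_of_sq_lt_sq' (by linarith) (norm_nonneg _) |>.2

theorem sq_sub_conj_mul_ne_zero (ha : ‖a‖ < R) (hζ : ‖ζ‖ < R) :
    (R : ℂ) ^ 2 - conj a * ζ ≠ 0 := by
  have hR : 0 < R := (norm_nonneg a).trans_lt ha
  rw [← norm_pos_iff]
  exact (mul_nonneg hR.le (norm_nonneg _)).trans_lt (mul_norm_sub_lt_norm_sq_sub_conj_mul ha hζ)

theorem norm_mobiusBall_lt (ha : ‖a‖ < R) (hζ : ‖ζ‖ < R) : ‖mobiusBall R a ζ‖ < R := by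
  have hR : 0 < R := (norm_nonneg a).trans_lt ha
  rw [mobiusBall, norm_div, norm_mul, norm_pow, norm_real, Real.norm_of_nonneg hR.le,
    div_lt_iff₀ (norm_pos_iff.2 (sq_sub_conj_mul_ne_zero ha hζ)), pow_two, mul_assoc]
  exact mul_lt_mul_of_pos_left (mul_norm_sub_lt_norm_sq_sub_conj_mul ha hζ) hR

theorem mobiusBall_self : mobiusBall R a a = 0 := by
  simp [mobiusBall]

theorem mobiusBall_neg_mul_self {u : ℂ} (hu : ‖u‖ = 1) {t : ℝ} (ht : R ^ 2 + t ≠ 0) :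
    mobiusBall R (-(t * u)) u = ((R ^ 2 * (1 + t) / (R ^ 2 + t) : ℝ) : ℂ) * u := by
  have hconj : conj u * u = 1 := by
    rw [mul_comm, Complex.mul_conj, Complex.normSq_eq_norm_sq, hu]; norm_num
  have hden : (R : ℂ) ^ 2 - conj (-(t * u)) * u = ((R ^ 2 + t : ℝ) : ℂ) := by
    simp only [map_neg, map_mul, conj_ofReal, neg_mul, mul_assoc, hconj]
    push_cast; ring
  have : (R : ℂ) ^ 2 + t ≠ 0 := by exact_mod_cast ht
  rw [mobiusBall, hden]
  push_cast
  field_simp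
  ring

end MobiusBall

section SchwarzLemma

variable {R : ℝ} {f : ℂ → ℂ}

theorem norm_mobiusBall_le_of_mapsTo_ball (hf : DifferentiableOn ℂ f (ball 0 R))
    (hmaps : MapsTo f (ball 0 R) (ball 0 R)) {z : ℂ} (hz : ‖z‖ < R) :
    ‖mobiusBall R (f 0) (f z)‖ ≤ ‖z‖ := by
  have hR : 0 < R := (norm_nonneg z).trans_lt hz
  have hf_lt : ∀ w ∈ ball (0 : ℂ) R, ‖f w‖ < R := fun w hw => mem_ball_zero_iff.1 (hmaps hw)
  have hf0 : ‖f 0‖ < R := hf_lt 0 (mem_ball_self hR)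
  refine Complex.norm_le_norm_of_mapsTo_ball (f := fun w => mobiusBall R (f 0) (f w)) ?_
    (fun w hw => mem_closedBall_zero_iff.2 (norm_mobiusBall_lt hf0 (hf_lt w hw)).le)
    mobiusBall_self hz
  exact ((differentiableOn_const _).mul (hf.sub_const _)).div
    ((differentiableOn_const _).sub ((differentiableOn_const _).mul hf))
    fun w hw => sq_sub_conj_mul_ne_zero hf0 (hf_lt w hw)

theorem map_zero_eq_zero_of_sphere_subset_image (hR : 1 < R) (hf : DifferentiableOn ℂ f (ball 0 R))
    (hmaps : MapsTo f (ball 0 R) (ball 0 R)) (hsphere : sphere 0 1 ⊆ f '' closedBall 0 1) :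
    f 0 = 0 := by
  by_contra h0
  set t := ‖f 0‖
  have ht : 0 < t := norm_pos_iff.2 h0
  set u := -(f 0 / t)
  have hu : ‖u‖ = 1 := by
    rw [norm_neg, norm_div, norm_real, Real.norm_of_nonneg ht.le, div_self ht.ne']
  have hf0 : f 0 = -(t * u) := by
    rw [neg_mul_eq_mul_neg, neg_neg, mul_div_cancel₀ _ (ofReal_ne_zero.2 ht.ne')]
  obtain ⟨z, hz, hfz⟩ := hsphere (mem_sphere_zero_iff_norm.2 hu)
  have hz1 : ‖z‖ ≤ 1 := mem_closedBall_zero_iff.1 hz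
  have hle := norm_mobiusBall_le_of_mapsTo_ball hf hmaps (hz1.trans_lt hR)
  rw [hfz, hf0, mobiusBall_neg_mul_self hu (by positivity), norm_mul, hu, mul_one, norm_real,
    Real.norm_of_nonneg (by positivity), div_le_iff₀ (by positivity)] at hle
  nlinarith [mul_pos ht (show 0 < R ^ 2 - 1 by nlinarith)]

theorem exists_eq_mul_of_norm_map_eq (hf : DifferentiableOn ℂ f (ball 0 R))
    (hmaps : MapsTo f (ball 0 R) (closedBall 0 R)) (hf0 : f 0 = 0) {z₀ : ℂ} (hz₀ : z₀ ∈ ball 0 R)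
    (hz₀0 : z₀ ≠ 0) (heq : ‖f z₀‖ = ‖z₀‖) :
    ∃ β : ℂ, ‖β‖ = 1 ∧ ∀ z ∈ ball (0 : ℂ) R, f z = β * z := by
  have hR : 0 < R := (norm_nonneg z₀).trans_lt (mem_ball_zero_iff.1 hz₀)
  have hslope : ‖dslope f 0 z₀‖ = R / R := by
    rw [dslope_of_ne _ hz₀0, slope_def_field, hf0, sub_zero, sub_zero, norm_div, heq,
      div_self (norm_ne_zero_iff.2 hz₀0), div_self hR.ne']
  refine ⟨dslope f 0 z₀, hslope.trans (div_self hR.ne'), fun z hz => ?_⟩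
  have := Complex.affine_of_mapsTo_ball_of_norm_dslope_eq_div hf (by rwa [hf0]) hz₀ hslope hz
  simpa [hf0, mul_comm] using this

end SchwarzLemma

/-- If `f` is holomorphic on `(1+ε)𝔻`, maps the closed unit disc
onto itself and maps `(1+ε)𝔻` into itself, then `f` is a rotation. -/
theorem onto_closed_disc_implies_rotation
    (ε : ℝ) (hε : 0 < ε) (f : ℂ → ℂ)
    (hf : DifferentiableOn ℂ f (Metric.ball 0 (1 + ε)))
    (hsurj : f '' Metric.closedBall (0:ℂ) 1 = Metric.closedBall (0:ℂ) 1)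
    (hmap : Set.MapsTo f (Metric.ball 0 (1 + ε)) (Metric.ball 0 (1 + ε))) :
    ∃ β : ℂ, ‖β‖ = 1 ∧ ∀ z ∈ Metric.ball (0:ℂ) (1 + ε), f z = β * z := by
  have hR : 1 < 1 + ε := by linarith
  have hf0 : f 0 = 0 :=
    map_zero_eq_zero_of_sphere_subset_image hR hf hmap (hsurj.symm ▸ sphere_subset_closedBall)
  obtain ⟨z₀, hz₀, hfz₀⟩ : (1 : ℂ) ∈ f '' closedBall 0 1 := by simp [hsurj]
  have hz₀1 : ‖z₀‖ ≤ 1 := mem_closedBall_zero_iff.1 hz₀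
  have hmap_closed := hmap.mono_right ball_subset_closedBall
  have hle : ‖f z₀‖ ≤ ‖z₀‖ := Complex.norm_le_norm_of_mapsTo_ball hf hmap_closed hf0 (hz₀1.trans_lt hR)
  have hz₀_norm : ‖z₀‖ = 1 := le_antisymm hz₀1 (by simpa [hfz₀] using hle)
  refine exists_eq_mul_of_norm_map_eq hf hmap_closed hf0 (z₀ := z₀) ?_ ?_ ?_
  · rwa [mem_ball_zero_iff, hz₀_norm]
  · rw [← norm_ne_zero_iff, hz₀_norm]
    exact one_ne_zero
  · rw [hfz₀, hz₀_norm, norm_one]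
end

section
/- Let 0 < r₁ < r₂ < 1 and let B₁, B₂ be finite Blaschke products such that r₁^{n−N₁} e^{iθ₁} z^{N₁} ∏_{i=1}^{K₁} ((z/r₁ − α_i)/(1 − conj(α_i) z/r₁)) = r₂^{n−N₂} e^{iθ₂} z^{N₂} ∏_{j=1}^{K₂} ((z/r₂ − β_j)/(1 − conj(β_j) z/r₂)) for all |z| < r₁, where 0 < |α_i|, |β_j| < 1. Then this is impossible unless K₁ = K₂ = 0; consequently B₁(z) = e^{iθ₁} z^{N₁} and B₂(z) = e^{iθ₂} z^{N₂} with N₁ = N₂ = n and e^{iθ₁} = e^{iθ₂}. -/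
/-!
Clearing denominators turns the identity into `c₁ z^N₁ ∏ (z - w) = c₂ z^N₂ ∏ (z - w)` on the
disc, the products running over the zeros of one side and the poles of the other. Polynomials
agreeing on a disc are equal, so `c₁ = c₂`, `N₁ = N₂` and
`{r₁ αᵢ} + {r₂ / conj βⱼ} = {r₂ βⱼ} + {r₁ / conj αᵢ}` as multisets.

Now weigh each point by `tent r₁ r₂ ‖w‖ = min(‖w‖, r₁, r₁ r₂ / ‖w‖)`, whose logarithm is a tent in
`log ‖w‖`: rising below `r₁`, flat on `[r₁, r₂]`, falling above `r₂`. The zero `r₁ αᵢ` weighs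
`r₁ ‖αᵢ‖`, strictly less than its partner pole `r₁ / conj αᵢ`; the pole `r₂ / conj βⱼ` weighs
`r₁ ‖βⱼ‖`, strictly less than its partner zero `r₂ βⱼ`. Hence the total weights of the two sides
can only agree when there are no factors at all, and then `c₁ = c₂` reads
`r₁ⁿ⁻ᴺ e^{iθ₁} = r₂ⁿ⁻ᴺ e^{iθ₂}` with `N = N₁ = N₂`, which forces `N = n` because `r₁ < r₂`.
-/

open Complex ComplexConjugate

lemma Polynomial.eq_of_C_mul_X_pow_mul_prod_eq {R : Type*} [CommRing R] [IsDomain R]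
    {S : Set R} (hS : S.Infinite) {c₁ c₂ : R} (hc₁ : c₁ ≠ 0) {N₁ N₂ : ℕ} {M₁ M₂ : Multiset R}
    (h₁ : (0 : R) ∉ M₁) (h₂ : (0 : R) ∉ M₂)
    (h : ∀ z ∈ S, c₁ * (z ^ N₁ * (M₁.map (z - ·)).prod) = c₂ * (z ^ N₂ * (M₂.map (z - ·)).prod)) :
    c₁ = c₂ ∧ N₁ = N₂ ∧ M₁ = M₂ := by
  classical
  have hmonic (N : ℕ) (M : Multiset R) : (X ^ N * (M.map (X - C ·)).prod).Monic :=
    (monic_X_pow N).mul (monic_multiset_prod_of_monic _ _ fun c _ => monic_X_sub_C c)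
  have hroots (N : ℕ) (M : Multiset R) : (X ^ N * (M.map (X - C ·)).prod).roots = N • {0} + M := by
    rw [roots_mul (hmonic N M).ne_zero, roots_X_pow, roots_multiset_prod_X_sub_C]
  have hpoly : C c₁ * (X ^ N₁ * (M₁.map (X - C ·)).prod) =
      C c₂ * (X ^ N₂ * (M₂.map (X - C ·)).prod) := by
    refine eq_of_infinite_eval_eq _ _ (hS.mono fun z hz => ?_)
    simpa [eval_multiset_prod, Multiset.map_map] using h z hz
  have hc : c₁ = c₂ := by
    simpa [leadingCoeff_mul, (hmonic N₁ M₁).leadingCoeff, (hmonic N₂ M₂).leadingCoeff] using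
      congrArg leadingCoeff hpoly
  subst hc
  have hM := congrArg roots (mul_left_cancel₀ (C_ne_zero.mpr hc₁) hpoly)
  rw [hroots, hroots] at hM
  have hN : N₁ = N₂ := by
    simpa [Multiset.count_eq_zero.mpr h₁, Multiset.count_eq_zero.mpr h₂] using
      congrArg (Multiset.count 0) hM
  subst hN
  exact ⟨rfl, rfl, add_left_cancel hM⟩

noncomputable def tent (r₁ r₂ t : ℝ) : ℝ := min t (min r₁ (r₁ * r₂ / t))

section Tent

variable {r₁ r₂ s : ℝ}

lemma tent_mul_left (hr₁ : 0 < r₁) (hr₁₂ : r₁ ≤ r₂) (hs₀ : 0 < s) (hs₁ : s ≤ 1) :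
    tent r₁ r₂ (r₁ * s) = r₁ * s := by
  have hss : s * s ≤ 1 := mul_le_one₀ hs₁ hs₀.le hs₁
  have : r₁ * s ≤ r₁ * r₂ / (r₁ * s) := by
    rw [le_div_iff₀ (by positivity)]
    nlinarith [mul_le_mul_of_nonneg_left hss (mul_self_nonneg r₁),
      mul_le_mul_of_nonneg_left hr₁₂ hr₁.le]
  simp [tent, mul_le_of_le_one_right hr₁.le hs₁, this]

lemma tent_div_right (hr₁ : 0 < r₁) (hr₁₂ : r₁ ≤ r₂) (hs₀ : 0 < s) (hs₁ : s ≤ 1) :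
    tent r₁ r₂ (r₂ / s) = r₁ * s := by
  have hr₂ := hr₁.trans_le hr₁₂
  have h₁ : r₁ * r₂ / (r₂ / s) = r₁ * s := by field_simp
  have h₂ : r₁ * s ≤ r₂ / s := by
    rw [le_div_iff₀ hs₀]; nlinarith [mul_le_mul hs₁ hs₁ hs₀.le zero_le_one]
  simp [tent, h₁, mul_le_of_le_one_right hr₁.le hs₁, h₂]

lemma lt_tent_div_left (hr₁ : 0 < r₁) (hr₁₂ : r₁ < r₂) (hs₀ : 0 < s) (hs₁ : s < 1) :
    r₁ * s < tent r₁ r₂ (r₁ / s) := by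
  have h : r₁ * r₂ / (r₁ / s) = r₂ * s := by field_simp
  simp only [tent, h, lt_min_iff]
  refine ⟨?_, mul_lt_of_lt_one_right hr₁ hs₁, by nlinarith⟩
  rw [lt_div_iff₀ hs₀]; nlinarith [mul_lt_mul'' hs₁ hs₁ hs₀.le hs₀.le]

lemma lt_tent_mul_right (hr₁ : 0 < r₁) (hr₁₂ : r₁ < r₂) (hs₀ : 0 < s) (hs₁ : s < 1) :
    r₁ * s < tent r₁ r₂ (r₂ * s) := by
  have h : r₁ * r₂ / (r₂ * s) = r₁ / s := by field_simp [(hr₁.trans hr₁₂).ne']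
  simp only [tent, h, lt_min_iff]
  refine ⟨by nlinarith, mul_lt_of_lt_one_right hr₁ hs₁, ?_⟩
  rw [lt_div_iff₀ hs₀]; nlinarith [mul_lt_mul'' hs₁ hs₁ hs₀.le hs₀.le]

end Tent

lemma isEmpty_of_prod_eq_prod {ι : Type*} [Fintype ι] {u v : ι → ℝ} (hu : ∀ i, 0 < u i)
    (huv : ∀ i, u i < v i) (h : ∏ i, u i = ∏ i, v i) : IsEmpty ι := by
  by_contra hne
  rw [not_isEmpty_iff] at hne
  exact (Finset.prod_lt_prod_of_nonempty (fun i _ => hu i) (fun i _ => huv i)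
    Finset.univ_nonempty).ne h

lemma eq_and_eq_of_pow_mul_div_pow_eq {r₁ r₂ : ℝ} (hr₁ : 0 < r₁) (hr₁₂ : r₁ < r₂) {n N : ℕ}
    {u₁ u₂ : ℂ} (hu₁ : ‖u₁‖ = 1) (hu₂ : ‖u₂‖ = 1)
    (h : (r₁ : ℂ) ^ n * u₁ / (r₁ : ℂ) ^ N = (r₂ : ℂ) ^ n * u₂ / (r₂ : ℂ) ^ N) :
    N = n ∧ u₁ = u₂ := by
  have hr₂ := hr₁.trans hr₁₂
  have hnorm : r₁ ^ n / r₁ ^ N = r₂ ^ n / r₂ ^ N := by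
    simpa [hu₁, hu₂, abs_of_pos hr₁, abs_of_pos hr₂] using congrArg norm h
  have hpow : (r₁ / r₂) ^ N = (r₁ / r₂) ^ n := by
    rw [div_pow, div_pow, div_eq_div_iff (by positivity) (by positivity)]
    rw [div_eq_div_iff (by positivity) (by positivity)] at hnorm
    linear_combination -hnorm
  have hN : N = n :=
    pow_right_injective₀ (div_pos hr₁ hr₂) ((div_lt_one hr₂).mpr hr₁₂).ne hpow
  subst hN
  have hr₁' : (r₁ : ℂ) ^ N ≠ 0 := pow_ne_zero _ (ofReal_ne_zero.mpr hr₁.ne')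
  have hr₂' : (r₂ : ℂ) ^ N ≠ 0 := pow_ne_zero _ (ofReal_ne_zero.mpr hr₂.ne')
  rw [mul_div_cancel_left₀ _ hr₁', mul_div_cancel_left₀ _ hr₂'] at h
  exact ⟨rfl, h⟩

section Blaschke

variable {ι : Type*} [Fintype ι]

noncomputable def scaledBlaschke (ρ : ℝ) (n N : ℕ) (θ : ℝ) (a : ι → ℂ) (z : ℂ) : ℂ :=
  (ρ : ℂ) ^ n * exp (θ * I) * (z / ρ) ^ N * ∏ i, (z / ρ - a i) / (1 - conj (a i) * (z / ρ))

noncomputable def blaschkeCoeff (ρ : ℝ) (n N : ℕ) (θ : ℝ) (a : ι → ℂ) : ℂ :=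
  (ρ : ℂ) ^ n * exp (θ * I) / (ρ : ℂ) ^ N * ∏ i, (-conj (a i))⁻¹

def blaschkeZeros (ρ : ℝ) (a : ι → ℂ) : Multiset ℂ :=
  Finset.univ.val.map fun i => ρ * a i

noncomputable def blaschkePoles (ρ : ℝ) (a : ι → ℂ) : Multiset ℂ :=
  Finset.univ.val.map fun i => ρ / conj (a i)

lemma blaschkeFactor_eq {ρ : ℝ} (hρ : ρ ≠ 0) {a : ℂ} (ha : a ≠ 0) (z : ℂ) :
    (z / ρ - a) / (1 - conj a * (z / ρ)) = (-conj a)⁻¹ * ((z - ρ * a) / (z - ρ / conj a)) := by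
  have hρ' : (ρ : ℂ) ≠ 0 := ofReal_ne_zero.mpr hρ
  have ha' : conj a ≠ 0 := (map_ne_zero _).mpr ha
  rw [show z / ρ - a = (z - ρ * a) / ρ by field_simp,
    show 1 - conj a * (z / ρ) = -conj a * (z - ρ / conj a) / ρ by field_simp; ring,
    div_div_div_cancel_right₀ hρ', div_mul_eq_div_div_swap, div_eq_inv_mul]

lemma scaledBlaschke_eq {ρ : ℝ} (hρ : ρ ≠ 0) (n N : ℕ) (θ : ℝ) {a : ι → ℂ} (ha : ∀ i, a i ≠ 0)
    (z : ℂ) :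
    scaledBlaschke ρ n N θ a z = blaschkeCoeff ρ n N θ a *
      (z ^ N * ((blaschkeZeros ρ a).map (z - ·)).prod) /
        ((blaschkePoles ρ a).map (z - ·)).prod := by
  simp only [scaledBlaschke, blaschkeCoeff, blaschkeZeros, blaschkePoles, Multiset.map_map,
    Function.comp_def, Finset.prod_map_val, blaschkeFactor_eq hρ (ha _), Finset.prod_mul_distrib,
    Finset.prod_div_distrib, div_pow]
  ring

lemma blaschkeCoeff_ne_zero {ρ : ℝ} (hρ : ρ ≠ 0) (n N : ℕ) (θ : ℝ) {a : ι → ℂ}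
    (ha : ∀ i, a i ≠ 0) : blaschkeCoeff ρ n N θ a ≠ 0 := by
  have hρ' : (ρ : ℂ) ≠ 0 := ofReal_ne_zero.mpr hρ
  simp [blaschkeCoeff, hρ', ha, Finset.prod_ne_zero_iff, exp_ne_zero]

lemma zero_notMem_blaschkeZeros {ρ : ℝ} (hρ : ρ ≠ 0) {a : ι → ℂ} (ha : ∀ i, a i ≠ 0) :
    (0 : ℂ) ∉ blaschkeZeros ρ a := by
  simp [blaschkeZeros, hρ, ha]

lemma zero_notMem_blaschkePoles {ρ : ℝ} (hρ : ρ ≠ 0) {a : ι → ℂ} (ha : ∀ i, a i ≠ 0) :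
    (0 : ℂ) ∉ blaschkePoles ρ a := by
  simp [blaschkePoles, hρ, ha]

lemma prod_map_sub_blaschkePoles_ne_zero {ρ : ℝ} (hρ : 0 < ρ) {a : ι → ℂ}
    (ha : ∀ i, 0 < ‖a i‖ ∧ ‖a i‖ < 1) {z : ℂ} (hz : ‖z‖ < ρ) :
    ((blaschkePoles ρ a).map (z - ·)).prod ≠ 0 := by
  refine Multiset.prod_ne_zero fun h0 => ?_
  obtain ⟨i, -, hi⟩ : ∃ i ∈ Finset.univ.val, z - ρ / conj (a i) = 0 := by
    simpa [blaschkePoles, Multiset.map_map, eq_comm] using h0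
  have hle : ρ ≤ ‖(ρ : ℂ) / conj (a i)‖ := by
    rw [norm_div, norm_conj, norm_real, Real.norm_of_nonneg hρ.le, le_div_iff₀ (ha i).1]
    exact mul_le_of_le_one_right hρ.le (ha i).2.le
  rw [sub_eq_zero.mp hi] at hz
  exact hz.not_ge hle

lemma blaschkeCoeff_mul_eq_of_scaledBlaschke_eq {κ : Type*} [Fintype κ] {r₁ r₂ : ℝ} (hr₁ : 0 < r₁)
    (hr₁₂ : r₁ < r₂) {n₁ n₂ N₁ N₂ : ℕ} {θ₁ θ₂ : ℝ} {a : ι → ℂ} {b : κ → ℂ}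
    (ha : ∀ i, 0 < ‖a i‖ ∧ ‖a i‖ < 1) (hb : ∀ j, 0 < ‖b j‖ ∧ ‖b j‖ < 1) {z : ℂ} (hz : ‖z‖ < r₁)
    (h : scaledBlaschke r₁ n₁ N₁ θ₁ a z = scaledBlaschke r₂ n₂ N₂ θ₂ b z) :
    blaschkeCoeff r₁ n₁ N₁ θ₁ a *
        (z ^ N₁ * ((blaschkeZeros r₁ a + blaschkePoles r₂ b).map (z - ·)).prod) =
      blaschkeCoeff r₂ n₂ N₂ θ₂ b *
        (z ^ N₂ * ((blaschkeZeros r₂ b + blaschkePoles r₁ a).map (z - ·)).prod) := by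
  have hr₂ := hr₁.trans hr₁₂
  rw [scaledBlaschke_eq hr₁.ne' _ _ _ (fun i => norm_pos_iff.mp (ha i).1),
    scaledBlaschke_eq hr₂.ne' _ _ _ (fun j => norm_pos_iff.mp (hb j).1),
    div_eq_div_iff (prod_map_sub_blaschkePoles_ne_zero hr₁ ha hz)
      (prod_map_sub_blaschkePoles_ne_zero hr₂ hb (hz.trans hr₁₂))] at h
  simp only [Multiset.map_add, Multiset.prod_add]
  linear_combination h

lemma isEmpty_of_blaschkeZeros_add_blaschkePoles_eq {κ : Type*} [Fintype κ] {r₁ r₂ : ℝ}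
    (hr₁ : 0 < r₁) (hr₁₂ : r₁ < r₂) {a : ι → ℂ} {b : κ → ℂ}
    (ha : ∀ i, 0 < ‖a i‖ ∧ ‖a i‖ < 1) (hb : ∀ j, 0 < ‖b j‖ ∧ ‖b j‖ < 1)
    (h : blaschkeZeros r₁ a + blaschkePoles r₂ b = blaschkeZeros r₂ b + blaschkePoles r₁ a) :
    IsEmpty ι ∧ IsEmpty κ := by
  have hr₂ := hr₁.trans hr₁₂
  have key := congrArg (fun M => (M.map fun w => tent r₁ r₂ ‖w‖).prod) h
  simp only [blaschkeZeros, blaschkePoles, Multiset.map_add, Multiset.prod_add, Multiset.map_map,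
    Function.comp_def, Finset.prod_map_val, norm_mul, norm_div, norm_conj, norm_real,
    Real.norm_of_nonneg hr₁.le, Real.norm_of_nonneg hr₂.le] at key
  simp only [tent_mul_left hr₁ hr₁₂.le (ha _).1 (ha _).2.le,
    tent_div_right hr₁ hr₁₂.le (hb _).1 (hb _).2.le] at key
  have hpos_a i : 0 < r₁ * ‖a i‖ := mul_pos hr₁ (ha i).1
  have hpos_b j : 0 < r₁ * ‖b j‖ := mul_pos hr₁ (hb j).1
  have hlt_a i : r₁ * ‖a i‖ < tent r₁ r₂ (r₁ / ‖a i‖) :=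
    lt_tent_div_left hr₁ hr₁₂ (ha i).1 (ha i).2
  have hlt_b j : r₁ * ‖b j‖ < tent r₁ r₂ (r₂ * ‖b j‖) :=
    lt_tent_mul_right hr₁ hr₁₂ (hb j).1 (hb j).2
  rw [mul_comm, mul_eq_mul_iff_eq_and_eq_of_pos
    (Finset.prod_le_prod (fun j _ => (hpos_b j).le) fun j _ => (hlt_b j).le)
    (Finset.prod_le_prod (fun i _ => (hpos_a i).le) fun i _ => (hlt_a i).le)
    (Finset.prod_pos fun j _ => hpos_b j)
    (Finset.prod_pos fun i _ => (hpos_a i).trans (hlt_a i))] at key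
  exact ⟨isEmpty_of_prod_eq_prod hpos_a hlt_a key.2, isEmpty_of_prod_eq_prod hpos_b hlt_b key.1⟩

end Blaschke

theorem scaled_blaschke_rigidity_general
    (r₁ r₂ : ℝ) (hr₁ : 0 < r₁) (hr₁₂ : r₁ < r₂)
    (n N₁ N₂ K₁ K₂ : ℕ) (θ₁ θ₂ : ℝ)
    (α : Fin K₁ → ℂ) (β : Fin K₂ → ℂ)
    (hα : ∀ i, 0 < ‖α i‖ ∧ ‖α i‖ < 1)
    (hβ : ∀ j, 0 < ‖β j‖ ∧ ‖β j‖ < 1)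
    (heq : ∀ z : ℂ, ‖z‖ < r₁ →
      (r₁ : ℂ) ^ n * Complex.exp (θ₁ * Complex.I) * (z / r₁) ^ N₁ *
          ∏ i, (z / r₁ - α i) / (1 - (starRingEnd ℂ) (α i) * (z / r₁))
        = (r₂ : ℂ) ^ n * Complex.exp (θ₂ * Complex.I) * (z / r₂) ^ N₂ *
          ∏ j, (z / r₂ - β j) / (1 - (starRingEnd ℂ) (β j) * (z / r₂))) :
    K₁ = 0 ∧ K₂ = 0 ∧ N₁ = n ∧ N₂ = n ∧
      Complex.exp (θ₁ * Complex.I) = Complex.exp (θ₂ * Complex.I) := by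
  have hα₀ i : α i ≠ 0 := norm_pos_iff.mp (hα i).1
  have hβ₀ j : β j ≠ 0 := norm_pos_iff.mp (hβ j).1
  have hr₂ := hr₁.trans hr₁₂
  obtain ⟨hc, hN, hM⟩ := Polynomial.eq_of_C_mul_X_pow_mul_prod_eq
    (infinite_of_mem_nhds 0 (Metric.ball_mem_nhds 0 hr₁))
    (blaschkeCoeff_ne_zero hr₁.ne' n N₁ θ₁ hα₀)
    (by simp [zero_notMem_blaschkeZeros hr₁.ne' hα₀, zero_notMem_blaschkePoles hr₂.ne' hβ₀])
    (by simp [zero_notMem_blaschkeZeros hr₂.ne' hβ₀, zero_notMem_blaschkePoles hr₁.ne' hα₀])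
    fun z hz => blaschkeCoeff_mul_eq_of_scaledBlaschke_eq hr₁ hr₁₂ hα hβ (mem_ball_zero_iff.mp hz)
      (heq z (mem_ball_zero_iff.mp hz))
  obtain ⟨hK₁, hK₂⟩ := isEmpty_of_blaschkeZeros_add_blaschkePoles_eq hr₁ hr₁₂ hα hβ hM
  subst hN
  simp only [blaschkeCoeff, Finset.univ_eq_empty, Finset.prod_empty, mul_one] at hc
  obtain ⟨rfl, he⟩ := eq_and_eq_of_pow_mul_div_pow_eq hr₁ hr₁₂ (norm_exp_ofReal_mul_I θ₁)
    (norm_exp_ofReal_mul_I θ₂) hc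
  exact ⟨(Fintype.card_fin K₁).symm.trans Fintype.card_eq_zero,
    (Fintype.card_fin K₂).symm.trans Fintype.card_eq_zero, rfl, rfl, he⟩

/-- If two scaled finite Blaschke products
`r₁ⁿ e^{iθ₁} (z/r₁)^{N₁} ∏ᵢ (z/r₁ - αᵢ)/(1 - conj(αᵢ) z/r₁)` and
`r₂ⁿ e^{iθ₂} (z/r₂)^{N₂} ∏ⱼ (z/r₂ - βⱼ)/(1 - conj(βⱼ) z/r₂)`
agree on `|z| < r₁` (with `0 < r₁ < r₂ < 1` and all `0 < |αᵢ|, |βⱼ| < 1`), then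
necessarily `K₁ = K₂ = 0`, `N₁ = N₂ = n`, and `e^{iθ₁} = e^{iθ₂}`. -/
theorem scaled_blaschke_rigidity
    (r₁ r₂ : ℝ) (hr₁ : 0 < r₁) (hr₁₂ : r₁ < r₂) (hr₂ : r₂ < 1)
    (n N₁ N₂ K₁ K₂ : ℕ) (θ₁ θ₂ : ℝ)
    (α : Fin K₁ → ℂ) (β : Fin K₂ → ℂ)
    (hα : ∀ i, 0 < ‖α i‖ ∧ ‖α i‖ < 1)
    (hβ : ∀ j, 0 < ‖β j‖ ∧ ‖β j‖ < 1)
    (heq : ∀ z : ℂ, ‖z‖ < r₁ →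
      (r₁ : ℂ) ^ n * Complex.exp (θ₁ * Complex.I) * (z / r₁) ^ N₁ *
          ∏ i, (z / r₁ - α i) / (1 - (starRingEnd ℂ) (α i) * (z / r₁))
        = (r₂ : ℂ) ^ n * Complex.exp (θ₂ * Complex.I) * (z / r₂) ^ N₂ *
          ∏ j, (z / r₂ - β j) / (1 - (starRingEnd ℂ) (β j) * (z / r₂))) :
    K₁ = 0 ∧ K₂ = 0 ∧ N₁ = n ∧ N₂ = n ∧
      Complex.exp (θ₁ * Complex.I) = Complex.exp (θ₂ * Complex.I) :=
  scaled_blaschke_rigidity_general r₁ r₂ hr₁ hr₁₂ n N₁ N₂ K₁ K₂ θ₁ θ₂ α β hα hβ heq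
end

section
/- Let 0 < r < 1 and δ_k, δ_{k+1}, δ_{k+2} ∈ 𝕋 be unimodular complex numbers such that sup_{|z|=r} |δ_k + δ_{k+1} z + δ_{k+2} z²| = 1 + r + r². Then δ_k δ_{k+2} = δ_{k+1}², i.e., arg δ_k − 2 arg δ_{k+1} + arg δ_{k+2} ≡ 0 (mod 2π). -/
/-!
Choose `z₀` on the circle `|z| = r` where the supremum is attained. There the triangle
inequality `|δₖ + δₖ₊₁ z₀ + δₖ₊₂ z₀²| ≤ 1 + r + r²` is an equality, so the three terms lie on
one ray: `δₖ₊₁ z₀ = r δₖ` and `δₖ₊₂ z₀² = r² δₖ`. Hence `δₖ δₖ₊₂ z₀² = (δₖ₊₁ z₀)²`, and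
`z₀ ≠ 0` cancels.
-/

open Metric Complex Set

theorem norm_add_eq_of_norm_add_add_eq {E : Type*} [SeminormedAddCommGroup E] {a b c : E}
    (h : ‖a + b + c‖ = ‖a‖ + ‖b‖ + ‖c‖) : ‖a + b‖ = ‖a‖ + ‖b‖ :=
  le_antisymm (norm_add_le a b) (by linarith [norm_add_le (a + b) c])

theorem sameRay_of_norm_add_add_eq {E : Type*} [NormedAddCommGroup E] [NormedSpace ℝ E]
    [StrictConvexSpace ℝ E] {a b c : E} (h : ‖a + b + c‖ = ‖a‖ + ‖b‖ + ‖c‖) :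
    SameRay ℝ a b ∧ SameRay ℝ a c := by
  have h' : ‖a + c + b‖ = ‖a‖ + ‖c‖ + ‖b‖ := by
    rw [add_right_comm, h, add_right_comm]
  exact ⟨sameRay_iff_norm_add.mpr (norm_add_eq_of_norm_add_add_eq h),
    sameRay_iff_norm_add.mpr (norm_add_eq_of_norm_add_add_eq h')⟩

theorem mul_eq_sq_of_sameRay {A : Type*} [NormedCommRing A] [NormedAlgebra ℝ A] {a b c : A}
    (hab : SameRay ℝ a b) (hac : SameRay ℝ a c) (hnorm : ‖a‖ * ‖c‖ = ‖b‖ ^ 2) :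
    a * c = b ^ 2 := by
  by_cases ha : a = 0
  · have hb : b = 0 := by simpa [ha] using hnorm.symm
    simp [ha, hb]
  have hna : ‖a‖ ^ 2 ≠ 0 := pow_ne_zero 2 (norm_ne_zero_iff.mpr ha)
  apply smul_right_injective A hna
  have e₁ := hab.norm_smul_eq
  have e₂ := hac.norm_smul_eq
  have e₃ := congrArg (algebraMap ℝ A) hnorm
  simp only [Algebra.smul_def, map_mul, map_pow] at e₁ e₂ e₃ ⊢
  linear_combination (algebraMap ℝ A ‖a‖ * a) * e₂ + a ^ 2 * e₃
    - (algebraMap ℝ A ‖a‖ * b + algebraMap ℝ A ‖b‖ * a) * e₁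

theorem extremal_quadratic_forces_aligned_args_general
    (r : ℝ) (hr : 0 < r)
    (δk δk1 δk2 : ℂ)
    (hδk : ‖δk‖ = 1) (hδk1 : ‖δk1‖ = 1)
    (hδk2 : ‖δk2‖ = 1)
    (hsup : (⨆ z : Metric.sphere (0:ℂ) r,
        ‖δk + δk1 * (z : ℂ) + δk2 * (z : ℂ) ^ 2‖) = 1 + r + r ^ 2) :
    δk * δk2 = δk1 ^ 2 := by
  obtain ⟨z₀, hz₀, hmax⟩ := (isCompact_sphere (0 : ℂ) r).exists_sSup_image_eq
    (NormedSpace.sphere_nonempty.mpr hr.le)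
    (f := fun z : ℂ => ‖δk + δk1 * z + δk2 * z ^ 2‖) (by fun_prop)
  rw [sSup_image', hsup] at hmax
  have hz₀r : ‖z₀‖ = r := mem_sphere_zero_iff_norm.mp hz₀
  have hequal : ‖δk + δk1 * z₀ + δk2 * z₀ ^ 2‖ = ‖δk‖ + ‖δk1 * z₀‖ + ‖δk2 * z₀ ^ 2‖ := by
    simp only [norm_mul, norm_pow, hδk, hδk1, hδk2, hz₀r, one_mul]
    exact hmax.symm
  obtain ⟨hray₁, hray₂⟩ := sameRay_of_norm_add_add_eq hequal
  have haligned : δk * (δk2 * z₀ ^ 2) = (δk1 * z₀) ^ 2 :=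
    mul_eq_sq_of_sameRay hray₁ hray₂
      (by simp only [norm_mul, norm_pow, hδk, hδk1, hδk2, hz₀r]; ring)
  have hz₀ne : z₀ ≠ 0 := ne_zero_of_mem_sphere hr.ne' ⟨z₀, hz₀⟩
  exact mul_right_cancel₀ (pow_ne_zero 2 hz₀ne) (by linear_combination haligned)

/-- If unimodular `δₖ, δₖ₊₁, δₖ₊₂` satisfy
`sup_{|z|=r} |δₖ + δₖ₊₁ z + δₖ₊₂ z²| = 1 + r + r²` for some `0 < r < 1`,
then `δₖ δₖ₊₂ = δₖ₊₁²`. -/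
theorem extremal_quadratic_forces_aligned_args
    (r : ℝ) (hr : 0 < r) (hr1 : r < 1)
    (δk δk1 δk2 : ℂ)
    (hδk : ‖δk‖ = 1) (hδk1 : ‖δk1‖ = 1)
    (hδk2 : ‖δk2‖ = 1)
    (hsup : (⨆ z : Metric.sphere (0:ℂ) r,
        ‖δk + δk1 * (z : ℂ) + δk2 * (z : ℂ) ^ 2‖) = 1 + r + r ^ 2) :
    δk * δk2 = δk1 ^ 2 :=
  extremal_quadratic_forces_aligned_args_general r hr δk δk1 δk2 hδk hδk1 hδk2 hsup
end

section
/- Let T : Hol(𝔻) → Hol(𝔻) be a continuous linear operator which is isometric for some seminorm ‖·‖_{∞,r} with 0 < r < 1, and suppose T𝟙 = α𝟙 with |α| = 1 (where 𝟙 is the constant function 1). Then for every n ≥ 1, the set {z : |z| = rⁿ} is contained in the image (T e_n)(closed disc of radius r), where e_n(z) = zⁿ. -/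
open Metric Complex Set

/-- The sup seminorm `‖f‖_{∞,r} = sup_{|z| ≤ r} |f(z)|`. -/
noncomputable def supNorm (r : ℝ) (f : ℂ → ℂ) : ℝ :=
  ⨆ z : Metric.closedBall (0:ℂ) r, ‖f (z : ℂ)‖

/-- `Hol(𝔻)`: the space of holomorphic functions on the open unit disc,
as a submodule of `ℂ → ℂ`. -/
noncomputable def HolD : Submodule ℂ (ℂ → ℂ) where
  carrier := {f | DifferentiableOn ℂ f (Metric.ball 0 1)}
  add_mem' := fun hf hg => hf.add hg
  zero_mem' := differentiableOn_const 0
  smul_mem' := fun c _ hf => hf.const_smul c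

/-! Fix `w` with `‖w‖ = rⁿ` and put `c = α⁻¹w`. As `T 𝟙 = α 𝟙`, the isometry gives
`‖T eₙ + w‖_{∞,r} = ‖eₙ + c‖_{∞,r} = 2rⁿ` (attained where `zⁿ = c`), while
`‖T eₙ‖_{∞,r} = ‖eₙ‖_{∞,r} = rⁿ = ‖w‖`. At a maximum point `z` of `|T eₙ + w|` on the disc of
radius `r`, the triangle inequality is then an equality between vectors of equal length, and
strict convexity of `ℂ` forces `(T eₙ)(z) = w`. -/

section SupNorm

variable {r : ℝ} {f : ℂ → ℂ}

lemma supNorm_eq_norm_of_isMaxOn {z : ℂ} (hz : z ∈ closedBall (0 : ℂ) r)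
    (hmax : IsMaxOn (‖f ·‖) (closedBall 0 r) z) : supNorm r f = ‖f z‖ :=
  have : Nonempty (closedBall (0 : ℂ) r) := ⟨⟨z, hz⟩⟩
  le_antisymm (ciSup_le fun y => hmax y.2)
    (le_ciSup (f := fun y : closedBall (0 : ℂ) r => ‖f y‖)
      ⟨‖f z‖, by rintro _ ⟨y, rfl⟩; exact hmax y.2⟩ ⟨z, hz⟩)

lemma norm_le_supNorm (hf : ContinuousOn f (closedBall 0 r)) {z : ℂ}
    (hz : z ∈ closedBall (0 : ℂ) r) : ‖f z‖ ≤ supNorm r f := by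
  have hbdd : BddAbove ((‖f ·‖) '' closedBall 0 r) :=
    (isCompact_closedBall 0 r).bddAbove_image hf.norm
  exact le_ciSup (f := fun y : closedBall (0 : ℂ) r => ‖f y‖)
    (by rwa [image_eq_range] at hbdd) ⟨z, hz⟩

lemma exists_norm_eq_supNorm (hr : 0 ≤ r) (hf : ContinuousOn f (closedBall 0 r)) :
    ∃ z ∈ closedBall (0 : ℂ) r, ‖f z‖ = supNorm r f := by
  obtain ⟨z, hz, hmax⟩ := (isCompact_closedBall (0 : ℂ) r).exists_isMaxOn
    ⟨0, mem_closedBall_self hr⟩ hf.norm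
  exact ⟨z, hz, (supNorm_eq_norm_of_isMaxOn hz hmax).symm⟩

lemma supNorm_pow (hr : 0 ≤ r) (n : ℕ) : supNorm r (· ^ n) = r ^ n := by
  have hr_mem : (r : ℂ) ∈ closedBall (0 : ℂ) r := by
    simp [abs_of_nonneg hr]
  have hmax : IsMaxOn (‖(· ^ n : ℂ → ℂ) ·‖) (closedBall 0 r) r := fun z hz => by
    simp only [norm_pow, Complex.norm_of_nonneg hr]
    exact pow_le_pow_left₀ (norm_nonneg z) (mem_closedBall_zero_iff.mp hz) n
  rw [supNorm_eq_norm_of_isMaxOn hr_mem hmax, norm_pow, Complex.norm_of_nonneg hr]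

lemma supNorm_pow_add_const (hr : 0 ≤ r) {n : ℕ} (hn : n ≠ 0) {c : ℂ} (hc : ‖c‖ = r ^ n) :
    supNorm r (fun z => z ^ n + c) = 2 * r ^ n := by
  obtain ⟨z₀, hz₀⟩ := IsAlgClosed.exists_pow_nat_eq c (Nat.pos_of_ne_zero hn)
  have hz₀_norm : ‖z₀‖ = r :=
    (pow_left_inj₀ (norm_nonneg z₀) hr hn).mp (by rw [← norm_pow, hz₀, hc])
  have hz₀_mem : z₀ ∈ closedBall (0 : ℂ) r := mem_closedBall_zero_iff.mpr hz₀_norm.le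
  have hval : ‖z₀ ^ n + c‖ = 2 * r ^ n := by
    rw [hz₀, ← two_mul, norm_mul, hc, Complex.norm_two]
  have hmax : IsMaxOn (fun z => ‖z ^ n + c‖) (closedBall 0 r) z₀ := fun z hz => by
    have hz_norm : ‖z‖ ≤ r := mem_closedBall_zero_iff.mp hz
    calc ‖z ^ n + c‖ ≤ ‖z‖ ^ n + ‖c‖ := (norm_add_le _ _).trans_eq (by rw [norm_pow])
      _ ≤ r ^ n + r ^ n := by rw [hc]; gcongr
      _ = ‖z₀ ^ n + c‖ := by rw [hval]; ring
  rw [supNorm_eq_norm_of_isMaxOn hz₀_mem hmax, hval]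

lemma mem_image_of_supNorm_add_const (hr : 0 ≤ r) (hf : ContinuousOn f (closedBall 0 r)) {w : ℂ}
    (hf_le : supNorm r f ≤ ‖w‖) (hfw : supNorm r (fun z => f z + w) = 2 * ‖w‖) :
    w ∈ f '' closedBall 0 r := by
  obtain ⟨z, hz, hz_max⟩ :=
    exists_norm_eq_supNorm (f := fun z => f z + w) hr (hf.add continuousOn_const)
  have hfz : ‖f z‖ = ‖w‖ := by
    have h_triangle := norm_add_le (f z) w
    rw [hz_max, hfw] at h_triangle
    linarith [(norm_le_supNorm hf hz).trans hf_le]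
  refine ⟨z, hz, eq_of_norm_eq_of_norm_add_eq hfz ?_⟩
  rw [hz_max, hfw, hfz, two_mul]

end SupNorm

theorem circle_in_image_of_Ten_general
    (r : ℝ) (hr : 0 < r) (hr1 : r < 1)
    (T : HolD →ₗ[ℂ] HolD)
    (hiso : ∀ f : HolD, supNorm r (T f).1 = supNorm r f.1)
    (α : ℂ) (hα : ‖α‖ = 1)
    (hone : T ⟨fun _ => 1, differentiableOn_const 1⟩
      = α • (⟨fun _ => 1, differentiableOn_const 1⟩ : HolD))
    (n : ℕ) (hn : 1 ≤ n) :
    Metric.sphere (0:ℂ) (r ^ n) ⊆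
      (T ⟨fun z => z ^ n, (differentiable_pow n).differentiableOn⟩).1 ''
        Metric.closedBall (0:ℂ) r := by
  set one : HolD := ⟨fun _ => 1, differentiableOn_const 1⟩
  set eₙ : HolD := ⟨fun z => z ^ n, (differentiable_pow n).differentiableOn⟩
  intro w hw
  rw [mem_sphere_zero_iff_norm] at hw
  have hα₀ : α ≠ 0 := norm_ne_zero_iff.mp (by rw [hα]; exact one_ne_zero)
  set c := α⁻¹ * w
  have hc : ‖c‖ = r ^ n := by rw [norm_mul, norm_inv, hα, hw, inv_one, one_mul]
  have hcα : c * α = w := (mul_comm c α).trans (mul_inv_cancel_left₀ hα₀ w)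
  have hu : (eₙ + c • one).1 = fun z => z ^ n + c := by
    funext z
    simp [eₙ, one]
  have hTu : (T (eₙ + c • one)).1 = fun z => (T eₙ).1 z + w := by
    rw [map_add, map_smul, hone, smul_smul, hcα]
    funext z
    simp [one]
  have hTeₙ_cont : ContinuousOn (T eₙ).1 (closedBall 0 r) :=
    (T eₙ).2.continuousOn.mono (closedBall_subset_ball hr1)
  refine mem_image_of_supNorm_add_const hr.le hTeₙ_cont ?_ ?_
  · rw [hiso, hw]
    exact (supNorm_pow hr.le n).le
  · rw [← hTu, hiso, hu, hw]
    exact supNorm_pow_add_const hr.le (Nat.one_le_iff_ne_zero.mp hn) hc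

/-- Step 2: If `T` is a continuous linear operator on `Hol(𝔻)`,
isometric for `‖·‖_{∞,r}`, and sends the constant `𝟙` to `α 𝟙` with `|α| = 1`,
then for every `n ≥ 1` the circle `rⁿ𝕋` is contained in the image of the
closed disc of radius `r` under `T eₙ`, where `eₙ(z) = zⁿ`. -/
theorem circle_in_image_of_Ten
    (r : ℝ) (hr : 0 < r) (hr1 : r < 1)
    (T : HolD →ₗ[ℂ] HolD)
    (hcont : ∀ ρ : ℝ, 0 < ρ → ρ < 1 → ∃ C s : ℝ, 0 < s ∧ s < 1 ∧ 0 ≤ C ∧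
      ∀ f : HolD, supNorm ρ (T f).1 ≤ C * supNorm s f.1)
    (hiso : ∀ f : HolD, supNorm r (T f).1 = supNorm r f.1)
    (α : ℂ) (hα : ‖α‖ = 1)
    (hone : T ⟨fun _ => 1, differentiableOn_const 1⟩
      = α • (⟨fun _ => 1, differentiableOn_const 1⟩ : HolD))
    (n : ℕ) (hn : 1 ≤ n) :
    Metric.sphere (0:ℂ) (r ^ n) ⊆
      (T ⟨fun z => z ^ n, (differentiable_pow n).differentiableOn⟩).1 ''
        Metric.closedBall (0:ℂ) r :=
  circle_in_image_of_Ten_general r hr hr1 T hiso α hα hone n hn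
end

section
/- Let φ : 𝔻 → 𝔻 be holomorphic, not a bijective elliptic automorphism, so that its iterates φ^{[n]} converge uniformly on compact subsets of 𝔻 to a constant ω ∈ closure(𝔻) (Denjoy–Wolff point). Then C_φ is not similar to any linear isometry of Hol(𝔻): there is no invertible continuous linear operator U on Hol(𝔻) with U^{-1} C_φ U isometric for all seminorms ‖·‖_{∞,1−1/p}. -/
open Metric Complex Set

/-- The composition operator `C_φ : f ↦ f ∘ φ` on `Hol(𝔻)`. -/
noncomputable def compOp (φ : ℂ → ℂ) (hφd : DifferentiableOn ℂ φ (Metric.ball 0 1))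
    (hφm : Set.MapsTo φ (Metric.ball 0 1) (Metric.ball 0 1)) : HolD →ₗ[ℂ] HolD where
  toFun f := ⟨fun z => f.1 (φ z), f.2.comp hφd hφm⟩
  map_add' _ _ := Subtype.ext rfl
  map_smul' _ _ := Subtype.ext rfl

/-! Suppose `T = U⁻¹ C_φ U` preserves the seminorms `‖·‖_{∞,1-1/p}` and put `g(z) = z - ω`.
Then `U⁻¹ (C_φⁿ g) = Tⁿ (U⁻¹ g)` has the same seminorms as `U⁻¹ g` for every `n`. On the other
hand `C_φⁿ g = φ^[n] - ω → 0` locally uniformly and `U⁻¹` is continuous, so these seminorms tend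
to `0`. Hence `U⁻¹ g` vanishes on the disc, and by continuity of `U` so does `g`, which is absurd. -/

open Filter Topology

/-- Continuity of `T` for the Fréchet topology of `Hol(𝔻)`. -/
def SupNormBounded (T : HolD → HolD) : Prop :=
  ∀ r : ℝ, 0 < r → r < 1 → ∃ C s : ℝ, 0 < s ∧ s < 1 ∧ 0 ≤ C ∧
    ∀ f : HolD, supNorm r (T f).1 ≤ C * supNorm s f.1

section SupNorm

variable {r s : ℝ} {f : ℂ → ℂ}

lemma supNorm_nonneg (r : ℝ) (f : ℂ → ℂ) : 0 ≤ supNorm r f :=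
  Real.iSup_nonneg fun _ => norm_nonneg _

lemma le_supNorm (hf : ContinuousOn f (closedBall 0 r)) {z : ℂ} (hz : z ∈ closedBall 0 r) :
    ‖f z‖ ≤ supNorm r f := by
  have hbdd : BddAbove (range fun z : closedBall (0 : ℂ) r => ‖f z‖) := by
    simpa only [image_eq_range] using
      ((isCompact_closedBall 0 r).image_of_continuousOn hf.norm).bddAbove
  exact le_ciSup hbdd ⟨z, hz⟩

lemma supNorm_le {M : ℝ} (hM : 0 ≤ M) (h : ∀ z ∈ closedBall 0 r, ‖f z‖ ≤ M) :
    supNorm r f ≤ M :=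
  Real.iSup_le (fun z => h z z.2) hM

lemma supNorm_mono (hsr : s ≤ r) (hf : ContinuousOn f (closedBall 0 r)) :
    supNorm s f ≤ supNorm r f :=
  supNorm_le (supNorm_nonneg r f) fun _ hz => le_supNorm hf (closedBall_subset_closedBall hsr hz)

lemma le_two_mul_supNorm_sub_const (hr : 0 ≤ r) (ω : ℂ) :
    r ≤ 2 * supNorm r (fun z => z - ω) := by
  have hcont : ContinuousOn (fun z : ℂ => z - ω) (closedBall 0 r) := by fun_prop
  have h0 := le_supNorm hcont (mem_closedBall_self hr)
  have hr' := le_supNorm hcont (z := r) (by simp [abs_of_nonneg hr])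
  calc r = ‖(r : ℂ) - ω - (0 - ω)‖ := by simp [abs_of_nonneg hr]
    _ ≤ ‖(r : ℂ) - ω‖ + ‖0 - ω‖ := norm_sub_le _ _
    _ ≤ 2 * supNorm r (fun z => z - ω) := by linarith

end SupNorm

lemma tendsto_supNorm_sub_of_tendstoLocallyUniformlyOn {ι : Type*} {l : Filter ι}
    {F : ι → ℂ → ℂ} {f : ℂ → ℂ} (hF : TendstoLocallyUniformlyOn F f l (ball 0 1))
    {s : ℝ} (hs : s < 1) :
    Tendsto (fun i => supNorm s (fun z => F i z - f z)) l (𝓝 0) := by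
  have hunif : TendstoUniformlyOn F f l (closedBall 0 s) :=
    (tendstoLocallyUniformlyOn_iff_tendstoUniformlyOn_of_compact (isCompact_closedBall 0 s)).mp
      (hF.mono (closedBall_subset_ball hs))
  rw [Metric.tendsto_nhds]
  intro ε hε
  filter_upwards [Metric.tendstoUniformlyOn_iff.mp hunif (ε / 2) (half_pos hε)] with i hi
  have hle : supNorm s (fun z => F i z - f z) ≤ ε / 2 :=
    supNorm_le (half_pos hε).le fun z hz => by
      simpa [dist_eq_norm, norm_sub_rev] using (hi z hz).le
  rw [Real.dist_0_eq_abs, abs_of_nonneg (supNorm_nonneg _ _)]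
  linarith

lemma SupNormBounded.tendsto_supNorm {T : HolD → HolD} (hT : SupNormBounded T)
    {ι : Type*} {l : Filter ι} {F : ι → HolD}
    (hF : ∀ s : ℝ, 0 < s → s < 1 → Tendsto (fun i => supNorm s (F i).1) l (𝓝 0))
    {r : ℝ} (hr0 : 0 < r) (hr1 : r < 1) :
    Tendsto (fun i => supNorm r (T (F i)).1) l (𝓝 0) := by
  obtain ⟨C, s, hs0, hs1, -, hbound⟩ := hT r hr0 hr1
  exact squeeze_zero (fun i => supNorm_nonneg _ _) (fun i => hbound (F i))
    (by simpa using (hF s hs0 hs1).const_mul C)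

lemma SupNormBounded.supNorm_eq_zero {T : HolD → HolD} (hT : SupNormBounded T) {f : HolD}
    (hf : ∀ s : ℝ, 0 < s → s < 1 → supNorm s f.1 = 0) {r : ℝ} (hr0 : 0 < r) (hr1 : r < 1) :
    supNorm r (T f).1 = 0 := by
  obtain ⟨C, s, hs0, hs1, -, hbound⟩ := hT r hr0 hr1
  refine le_antisymm ?_ (supNorm_nonneg _ _)
  simpa [hf s hs0 hs1] using hbound f

lemma one_sub_one_div_mem_Ioo {p : ℕ} (hp : 1 < p) : 1 - 1 / (p : ℝ) ∈ Ioo 0 1 := by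
  have hp' : (1 : ℝ) < p := by exact_mod_cast hp
  constructor
  · rw [sub_pos, div_lt_one (by linarith)]
    exact hp'
  · simpa using hp'.trans' one_pos

lemma supNorm_eq_zero_of_forall_one_sub_inv {f : ℂ → ℂ} (hf : ContinuousOn f (ball 0 1))
    (h : ∀ p : ℕ, 1 < p → supNorm (1 - 1 / (p : ℝ)) f = 0) {s : ℝ} (hs : s < 1) :
    supNorm s f = 0 := by
  obtain ⟨p, hp⟩ := exists_nat_gt (max 1 (1 / (1 - s)))
  rw [max_lt_iff] at hp
  have hp0 : (0 : ℝ) < p := one_pos.trans hp.1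
  have hsp : s ≤ 1 - 1 / (p : ℝ) := by
    rw [div_lt_iff₀ (by linarith)] at hp
    rw [le_sub_comm, div_le_iff₀ hp0]
    linarith
  have hp1 : 1 < p := by exact_mod_cast hp.1
  refine le_antisymm ?_ (supNorm_nonneg s f)
  calc supNorm s f ≤ supNorm (1 - 1 / (p : ℝ)) f :=
        supNorm_mono hsp (hf.mono (closedBall_subset_ball (one_sub_one_div_mem_Ioo hp1).2))
    _ = 0 := h p hp1

lemma LinearEquiv.apply_symm_iterate_eq {R M : Type*} [Semiring R] [AddCommMonoid M]
    [Module R M] (U : M ≃ₗ[R] M)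
    (C : M → M) (ν : M → ℝ) (hiso : ∀ f, ν (U.symm (C (U f))) = ν f) (n : ℕ) (g : M) :
    ν (U.symm (C^[n] g)) = ν (U.symm g) := by
  induction n with
  | zero => rfl
  | succ n ih =>
    rw [Function.iterate_succ_apply', ← ih, ← hiso (U.symm (C^[n] g)), U.apply_symm_apply]

lemma compOp_iterate_apply (φ : ℂ → ℂ) (hφd : DifferentiableOn ℂ φ (ball 0 1))
    (hφm : MapsTo φ (ball 0 1) (ball 0 1)) (n : ℕ) (f : HolD) (z : ℂ) :
    ((compOp φ hφd hφm)^[n] f).1 z = f.1 (φ^[n] z) := by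
  induction n generalizing z with
  | zero => rfl
  | succ n ih =>
    rw [Function.iterate_succ_apply', Function.iterate_succ_apply]
    exact ih (φ z)

theorem non_elliptic_composition_not_similar_to_isometry_general
    (φ : ℂ → ℂ) (hφd : DifferentiableOn ℂ φ (Metric.ball 0 1))
    (hφm : Set.MapsTo φ (Metric.ball 0 1) (Metric.ball 0 1))
    (ω : ℂ)
    (hDW : TendstoLocallyUniformlyOn (fun (n : ℕ) (z : ℂ) => φ^[n] z)
      (fun _ => ω) Filter.atTop (Metric.ball 0 1)) :
    ¬ ∃ U : HolD ≃ₗ[ℂ] HolD,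
      (∀ r : ℝ, 0 < r → r < 1 → ∃ C s : ℝ, 0 < s ∧ s < 1 ∧ 0 ≤ C ∧
        ∀ f : HolD, supNorm r (U f).1 ≤ C * supNorm s f.1) ∧
      (∀ r : ℝ, 0 < r → r < 1 → ∃ C s : ℝ, 0 < s ∧ s < 1 ∧ 0 ≤ C ∧
        ∀ f : HolD, supNorm r (U.symm f).1 ≤ C * supNorm s f.1) ∧
      ∀ (f : HolD) (p : ℕ), 0 < p →
        supNorm (1 - 1 / (p : ℝ)) ((U.symm (compOp φ hφd hφm (U f))).1)
          = supNorm (1 - 1 / (p : ℝ)) f.1 := by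
  rintro ⟨U, hU, hUsymm, hiso⟩
  let g : HolD := ⟨fun z => z - ω, (differentiable_id.sub_const ω).differentiableOn⟩
  have hiter : ∀ s : ℝ, 0 < s → s < 1 →
      Tendsto (fun n => supNorm s ((compOp φ hφd hφm)^[n] g).1) atTop (𝓝 0) := fun s _ hs => by
    refine (tendsto_supNorm_sub_of_tendstoLocallyUniformlyOn hDW hs).congr fun n => ?_
    exact congrArg (supNorm s) (funext fun z => (compOp_iterate_apply φ hφd hφm n g z).symm)
  have hUg : ∀ p : ℕ, 1 < p → supNorm (1 - 1 / (p : ℝ)) (U.symm g).1 = 0 := fun p hp => by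
    obtain ⟨hr0, hr1⟩ := one_sub_one_div_mem_Ioo hp
    refine tendsto_nhds_unique (tendsto_const_nhds.congr fun n => ?_)
      (SupNormBounded.tendsto_supNorm hUsymm hiter hr0 hr1)
    exact (U.apply_symm_iterate_eq (compOp φ hφd hφm)
      (fun f => supNorm (1 - 1 / (p : ℝ)) f.1) (fun f => hiso f p (by omega)) n g).symm
  have hg : supNorm (1 / 2) (fun z => z - ω) = 0 := by
    simpa using SupNormBounded.supNorm_eq_zero hU
      (fun s _ hs => supNorm_eq_zero_of_forall_one_sub_inv (U.symm g).2.continuousOn hUg hs)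
      (r := 1 / 2) (by norm_num) (by norm_num)
  linarith [le_two_mul_supNorm_sub_const (r := 1 / 2) (by norm_num) ω]

/-- if the iterates of a holomorphic self-map `φ` of the disc
(not a bijective elliptic automorphism) converge locally uniformly to a
Denjoy–Wolff constant `ω ∈ closure 𝔻`, then `C_φ` is not similar to any linear
isometry of `Hol(𝔻)`: there is no invertible continuous linear `U` such that
`U⁻¹ C_φ U` is isometric for all the seminorms `‖·‖_{∞,1-1/p}`. -/
theorem non_elliptic_composition_not_similar_to_isometry
    (φ : ℂ → ℂ) (hφd : DifferentiableOn ℂ φ (Metric.ball 0 1))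
    (hφm : Set.MapsTo φ (Metric.ball 0 1) (Metric.ball 0 1))
    (hnotell : ¬ (Set.BijOn φ (Metric.ball (0:ℂ) 1) (Metric.ball (0:ℂ) 1)
      ∧ ∃ a ∈ Metric.ball (0:ℂ) 1, φ a = a))
    (ω : ℂ) (hω : ω ∈ Metric.closedBall (0:ℂ) 1)
    (hDW : TendstoLocallyUniformlyOn (fun (n : ℕ) (z : ℂ) => φ^[n] z)
      (fun _ => ω) Filter.atTop (Metric.ball 0 1)) :
    ¬ ∃ U : HolD ≃ₗ[ℂ] HolD,
      (∀ r : ℝ, 0 < r → r < 1 → ∃ C s : ℝ, 0 < s ∧ s < 1 ∧ 0 ≤ C ∧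
        ∀ f : HolD, supNorm r (U f).1 ≤ C * supNorm s f.1) ∧
      (∀ r : ℝ, 0 < r → r < 1 → ∃ C s : ℝ, 0 < s ∧ s < 1 ∧ 0 ≤ C ∧
        ∀ f : HolD, supNorm r (U.symm f).1 ≤ C * supNorm s f.1) ∧
      ∀ (f : HolD) (p : ℕ), 0 < p →
        supNorm (1 - 1 / (p : ℝ)) ((U.symm (compOp φ hφd hφm (U f))).1)
          = supNorm (1 - 1 / (p : ℝ)) f.1 :=
  non_elliptic_composition_not_similar_to_isometry_general φ hφd hφm ω hDW
end

section
/- Let N ≥ 2, β a primitive N-th root of unity, θ ∈ ℝ, and f₁, …, f_{N−1} ∈ Hol(𝔻). Define m = exp(iθ + Σ_{k=1}^{N−1} z^k f_k(z^N)). Then there exists w ∈ Hol(𝔻) nonvanishing on 𝔻 such that w(z) m(z) / w(βz) = e^{iθ} for all z ∈ 𝔻; explicitly, w = exp(w̃) where w̃(z) = Σ_{k=1}^{N−1} Σ_{ℓ≥0} (a_ℓ^{(k)}/(β^k − 1)) z^{Nℓ+k} with f_k(z) = Σ_{ℓ≥0} a_ℓ^{(k)} z^ℓ. Consequently M_w W_{m,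 βz} M_w^{-1} = T_{e^{iθ}, β} on Hol(𝔻). -/
open Metric Complex Set

/-!
Write `h(z) = ∑_{k=1}^{N-1} zᵏ f_k(z^N)`, so that `m = exp(iθ + h)`. Since `β^N = 1`, the
substitution `z ↦ βz` multiplies the summand `zᵏ f_k(z^N)` by `βᵏ` (this is the coefficientwise
identity `(βz)^{Nℓ+k} = βᵏ z^{Nℓ+k}`). Hence `w̃(z) = ∑_k zᵏ f_k(z^N) / (βᵏ - 1)` is holomorphic on
the disc and solves `w̃(βz) = w̃(z) + h(z)`, and `w = exp w̃` satisfies `w · m = e^{iθ} · w(β ·)`.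
Dividing by the nonvanishing `w(βz)` gives the conjugation identity.
-/

noncomputable def cohomologicalSolution (β : ℂ) (s : Finset ℕ) (N : ℕ) (f : ℕ → ℂ → ℂ)
    (z : ℂ) : ℂ :=
  ∑ k ∈ s, z ^ k * f k (z ^ N) / (β ^ k - 1)

theorem cohomologicalSolution_mul_root {β : ℂ} {N : ℕ} (hβN : β ^ N = 1) {s : Finset ℕ}
    (hβs : ∀ k ∈ s, β ^ k ≠ 1) (f : ℕ → ℂ → ℂ) (z : ℂ) :
    cohomologicalSolution β s N f (β * z)
      = cohomologicalSolution β s N f z + ∑ k ∈ s, z ^ k * f k (z ^ N) := by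
  rw [cohomologicalSolution, cohomologicalSolution, ← Finset.sum_add_distrib]
  refine Finset.sum_congr rfl fun k hk => ?_
  have hk : β ^ k - 1 ≠ 0 := sub_ne_zero.2 (hβs k hk)
  rw [mul_pow, mul_pow, hβN, one_mul]
  field_simp
  ring

theorem differentiableOn_comp_pow_ball {f : ℂ → ℂ} (hf : DifferentiableOn ℂ f (ball 0 1))
    {N : ℕ} (hN : N ≠ 0) : DifferentiableOn ℂ (fun z => f (z ^ N)) (ball 0 1) :=
  hf.comp (differentiable_pow N).differentiableOn fun z hz => by
    simpa using pow_lt_one₀ (norm_nonneg z) (mem_ball_zero_iff.1 hz) hN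

theorem differentiableOn_cohomologicalSolution {β : ℂ} {N : ℕ} (hN : N ≠ 0) {s : Finset ℕ}
    {f : ℕ → ℂ → ℂ} (hf : ∀ k ∈ s, DifferentiableOn ℂ (f k) (ball 0 1)) :
    DifferentiableOn ℂ (cohomologicalSolution β s N f) (ball 0 1) := by
  unfold cohomologicalSolution
  refine DifferentiableOn.fun_sum fun k hk => ?_
  exact (((differentiable_pow k).differentiableOn).mul
    (differentiableOn_comp_pow_ball (hf k hk) hN)).div_const _

/-- let `β` be a primitive `N`-th root of unity (`N ≥ 2`),
`θ ∈ ℝ`, `f₁, …, f_{N-1} ∈ Hol(𝔻)`, and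
`m(z) = exp(iθ + ∑_{k=1}^{N-1} zᵏ f_k(z^N))`. Then there is a nonvanishing
`w ∈ Hol(𝔻)` solving the cohomological equation `w(z) m(z) = e^{iθ} w(βz)`;
consequently, conjugating `W_{m,βz}` by `M_w` gives `T_{e^{iθ},β}`:
`w(z)·(m(z)·g(βz)/w(βz)) = e^{iθ} g(βz)` for every `g` and `z ∈ 𝔻`. -/
theorem periodic_weight_conjugate_to_isometry
    (N : ℕ) (hN : 2 ≤ N) (β : ℂ) (hβN : β ^ N = 1)
    (hβk : ∀ k : ℕ, 1 ≤ k → k < N → β ^ k ≠ 1)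
    (θ : ℝ) (f : ℕ → ℂ → ℂ)
    (hf : ∀ k, DifferentiableOn ℂ (f k) (Metric.ball 0 1))
    (m : ℂ → ℂ)
    (hm : ∀ z ∈ Metric.ball (0:ℂ) 1,
      m z = Complex.exp (θ * Complex.I
        + ∑ k ∈ Finset.Icc 1 (N - 1), z ^ k * f k (z ^ N))) :
    ∃ w : ℂ → ℂ, DifferentiableOn ℂ w (Metric.ball 0 1) ∧
      (∀ z ∈ Metric.ball (0:ℂ) 1, w z ≠ 0) ∧
      (∀ z ∈ Metric.ball (0:ℂ) 1,
        w z * m z = Complex.exp (θ * Complex.I) * w (β * z)) ∧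
      ∀ (g : ℂ → ℂ), ∀ z ∈ Metric.ball (0:ℂ) 1,
        w z * (m z * (g (β * z) / w (β * z)))
          = Complex.exp (θ * Complex.I) * g (β * z) := by
  have hβs : ∀ k ∈ Finset.Icc 1 (N - 1), β ^ k ≠ 1 := fun k hk => by
    rw [Finset.mem_Icc] at hk
    exact hβk k hk.1 (by omega)
  have hcoh : ∀ z ∈ ball (0:ℂ) 1,
      exp (cohomologicalSolution β (Finset.Icc 1 (N - 1)) N f z) * m z
        = exp (θ * I) * exp (cohomologicalSolution β (Finset.Icc 1 (N - 1)) N f (β * z)) := by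
    intro z hz
    rw [hm z hz, cohomologicalSolution_mul_root hβN hβs, ← exp_add, ← exp_add, add_left_comm]
  refine ⟨fun z => exp (cohomologicalSolution β (Finset.Icc 1 (N - 1)) N f z),
    (differentiableOn_cohomologicalSolution (by omega) fun k _ => hf k).cexp,
    fun z _ => exp_ne_zero _, hcoh, fun g z hz => ?_⟩
  rw [← mul_assoc, ← mul_div_assoc, hcoh z hz, mul_right_comm,
    mul_div_cancel_right₀ _ (exp_ne_zero _)]
end
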